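/- arXiv:1406.1091 — 7 statements merged into one kernel-verified Lean document; each statement's English description precedes it below -/
import Mathlib

section
/- Let N ≥ 1 be an integer. For every real α > N and every θ ≥ 0 there exists a > 0 (depending on α, θ and N) such that the function Γ : ℤ^N → (0,∞) defined by Γ(i) = a·|i|^{−α}·e^{−θ|i|} for i ≠ 0 and Γ(0) = a is a decay function, i.e. it satisfies ∑_{j∈ℤ^N} Γ(j) ≤ 1 and ∑_{j∈ℤ^N} Γ(i−j)Γ(j−k) ≤ Γ(i−k) for all i, k ∈ ℤ^N. -/
/-!
Write `⟨i⟩ = max 1 |i|` and `γ(i) = ⟨i⟩^{-α} e^{-θ|i|}`, so that `Γ = a γ`. Since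
`|m| ≤ |m - j| + |j|`, one of `⟨m - j⟩`, `⟨j⟩` is at least `⟨m⟩ / 2`, whence
`γ(m - j) γ(j) ≤ 2^α γ(m) (⟨j⟩^{-α} + ⟨m - j⟩^{-α})`; the exponential factors only help because
`θ ≥ 0`. Summing over `j`, the convolution `γ * γ` is at most `C γ` with `C = 2^{α+1} ∑ ⟨i⟩^{-α}`,
which is finite for `α > N` by comparison with a product of one-dimensional `p`-series.
Then `a = C⁻¹` works.
-/

open scoped BigOperators

noncomputable section

/-- The ℓ¹-norm of a lattice point `i ∈ ℤ^N`, as a real number. -/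
def l1norm {N : ℕ} (i : Fin N → ℤ) : ℝ := ∑ s, |(i s : ℝ)|

/-- `Γ : ℤ^N → (0,∞)` is a decay function when `∑_j Γ(j) ≤ 1` and
`∑_j Γ(i−j)Γ(j−k) ≤ Γ(i−k)` for all `i, k`. -/
def IsDecayFunction {N : ℕ} (Γ : (Fin N → ℤ) → ℝ) : Prop :=
  (∀ i, 0 < Γ i) ∧ Summable Γ ∧ (∑' j, Γ j) ≤ 1 ∧
    ∀ i k : Fin N → ℤ, (∑' j, Γ (i - j) * Γ (j - k)) ≤ Γ (i - k)

lemma summable_pi_prod {ι κ : Type*} [Fintype ι] {g : κ → ℝ} (hg0 : 0 ≤ g)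
    (hg : Summable g) : Summable fun x : ι → κ => ∏ s, g (x s) := by
  classical
  refine summable_of_sum_le (c := ∏ _s : ι, ∑' n, g n)
    (fun x => Finset.prod_nonneg fun s _ => hg0 _) fun u => ?_
  let t : ι → Finset κ := fun s => u.image (· s)
  calc ∑ x ∈ u, ∏ s, g (x s)
      ≤ ∑ x ∈ Fintype.piFinset t, ∏ s, g (x s) :=
        Finset.sum_le_sum_of_subset_of_nonneg
          (fun x hx => Fintype.mem_piFinset.mpr fun s => Finset.mem_image_of_mem _ hx)
          (fun x _ _ => Finset.prod_nonneg fun s _ => hg0 _)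
    _ = ∏ s, ∑ n ∈ t s, g n := (Finset.prod_univ_sum t fun _ n => g n).symm
    _ ≤ ∏ _s : ι, ∑' n, g n :=
        Finset.prod_le_prod (fun s _ => Finset.sum_nonneg fun n _ => hg0 n)
          fun s _ => hg.sum_le_tsum _ fun n _ => hg0 n

lemma summable_max_one_abs_int_rpow_neg {β : ℝ} (hβ : 1 < β) :
    Summable fun n : ℤ => max 1 |(n : ℝ)| ^ (-β) := by
  classical
  refine ((Real.summable_abs_int_rpow hβ).update 0 1).congr fun n => ?_
  rcases eq_or_ne n 0 with rfl | hn
  · simp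
  · have : (1 : ℝ) ≤ |(n : ℝ)| := by exact_mod_cast Int.one_le_abs hn
    simp [hn, max_eq_right this]

section Lattice

variable {N : ℕ}

lemma l1norm_nonneg (i : Fin N → ℤ) : 0 ≤ l1norm i :=
  Finset.sum_nonneg fun _ _ => abs_nonneg _

@[simp]
lemma l1norm_zero : l1norm (0 : Fin N → ℤ) = 0 := by simp [l1norm]

lemma abs_apply_le_l1norm (i : Fin N → ℤ) (s : Fin N) : |(i s : ℝ)| ≤ l1norm i :=
  Finset.single_le_sum (f := fun t => |(i t : ℝ)|) (fun _ _ => abs_nonneg _) (Finset.mem_univ s)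

lemma one_le_l1norm {i : Fin N → ℤ} (hi : i ≠ 0) : 1 ≤ l1norm i := by
  obtain ⟨s, hs⟩ := Function.ne_iff.mp hi
  calc (1 : ℝ) ≤ |(i s : ℝ)| := by exact_mod_cast Int.one_le_abs hs
    _ ≤ l1norm i := abs_apply_le_l1norm i s

lemma l1norm_le_l1norm_sub_add (m j : Fin N → ℤ) : l1norm m ≤ l1norm (m - j) + l1norm j := by
  rw [l1norm, l1norm, l1norm, ← Finset.sum_add_distrib]
  refine Finset.sum_le_sum fun s _ => ?_
  have := abs_add_le ((m s : ℝ) - j s) (j s)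
  simpa using this

def l1bracket (i : Fin N → ℤ) : ℝ := max 1 (l1norm i)

lemma one_le_l1bracket (i : Fin N → ℤ) : 1 ≤ l1bracket i := le_max_left _ _

lemma l1bracket_pos (i : Fin N → ℤ) : 0 < l1bracket i := one_pos.trans_le (one_le_l1bracket i)

lemma l1bracket_le_l1bracket_sub_add (m j : Fin N → ℤ) :
    l1bracket m ≤ l1bracket (m - j) + l1bracket j :=
  max_le (by linarith [one_le_l1bracket (m - j), one_le_l1bracket j])
    ((l1norm_le_l1norm_sub_add m j).trans (add_le_add (le_max_right _ _) (le_max_right _ _)))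

lemma l1bracket_le_two_mul_or (m j : Fin N → ℤ) :
    l1bracket m ≤ 2 * l1bracket (m - j) ∨ l1bracket m ≤ 2 * l1bracket j := by
  have := l1bracket_le_l1bracket_sub_add m j
  by_contra! h
  linarith [h.1, h.2]

def polyWeight (α : ℝ) (i : Fin N → ℤ) : ℝ := l1bracket i ^ (-α)

lemma polyWeight_pos (α : ℝ) (i : Fin N → ℤ) : 0 < polyWeight α i :=
  Real.rpow_pos_of_pos (l1bracket_pos i) _

@[simp]
lemma polyWeight_zero (α : ℝ) : polyWeight α (0 : Fin N → ℤ) = 1 := by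
  simp [polyWeight, l1bracket]

lemma polyWeight_le_prod {α : ℝ} (hN : 1 ≤ N) (hα : 0 ≤ α) (i : Fin N → ℤ) :
    polyWeight α i ≤ ∏ s, max 1 |(i s : ℝ)| ^ (-(α / N)) := by
  have hmax : ∀ s, 0 ≤ max 1 |(i s : ℝ)| := fun s => zero_le_one.trans (le_max_left _ _)
  have hprod_le : ∏ s, max 1 |(i s : ℝ)| ≤ l1bracket i ^ N := by
    calc ∏ s, max 1 |(i s : ℝ)| ≤ ∏ _s : Fin N, l1bracket i :=
          Finset.prod_le_prod (fun s _ => hmax s)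
            fun s _ => max_le_max le_rfl (abs_apply_le_l1norm i s)
      _ = l1bracket i ^ N := by simp
  have hprod_one : 1 ≤ ∏ s, max 1 |(i s : ℝ)| := Finset.one_le_prod fun s _ => le_max_left _ _
  have hN' : (N : ℝ) ≠ 0 := by positivity
  calc polyWeight α i = (l1bracket i ^ N) ^ (-(α / N)) := by
        rw [polyWeight, ← Real.rpow_natCast, ← Real.rpow_mul (l1bracket_pos i).le]
        field_simp
    _ ≤ (∏ s, max 1 |(i s : ℝ)|) ^ (-(α / N)) :=
        Real.rpow_le_rpow_of_nonpos (one_pos.trans_le hprod_one) hprod_le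
          (neg_nonpos.mpr (by positivity))
    _ = ∏ s, max 1 |(i s : ℝ)| ^ (-(α / N)) :=
        (Real.finsetProd_rpow _ _ (fun s _ => hmax s) _).symm

lemma summable_polyWeight {α : ℝ} (hN : 1 ≤ N) (hα : (N : ℝ) < α) :
    Summable (polyWeight (N := N) α) := by
  have hN' : (0 : ℝ) < N := by exact_mod_cast hN
  have hβ : 1 < α / N := (one_lt_div hN').mpr hα
  refine (summable_pi_prod (fun n => by positivity)
    (summable_max_one_abs_int_rpow_neg hβ)).of_nonneg_of_le
    (fun i => (polyWeight_pos α i).le) (polyWeight_le_prod hN (hN'.le.trans hα.le))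

lemma polyWeight_le_of_le_two_mul {α : ℝ} (hα : 0 ≤ α) {m u : Fin N → ℤ}
    (h : l1bracket m ≤ 2 * l1bracket u) : polyWeight α u ≤ 2 ^ α * polyWeight α m := by
  have hm := (l1bracket_pos m).le
  calc polyWeight α u ≤ (l1bracket m / 2) ^ (-α) :=
        Real.rpow_le_rpow_of_nonpos (half_pos (l1bracket_pos m)) (by linarith)
          (neg_nonpos.mpr hα)
    _ = 2 ^ α * polyWeight α m := by
        rw [Real.div_rpow hm zero_le_two, Real.rpow_neg zero_le_two, polyWeight]
        field_simp

/-- The smaller of the two factors is controlled by `2 ^ α * polyWeight α m`, the larger one by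
the sum of both. -/
lemma polyWeight_sub_mul_le {α : ℝ} (hα : 0 ≤ α) (m j : Fin N → ℤ) :
    polyWeight α (m - j) * polyWeight α j ≤
      2 ^ α * polyWeight α m * (polyWeight α j + polyWeight α (m - j)) := by
  have h₁ := polyWeight_pos α (m - j)
  have h₂ := polyWeight_pos α j
  rcases l1bracket_le_two_mul_or m j with h | h
  · have := polyWeight_le_of_le_two_mul hα h
    nlinarith
  · have := polyWeight_le_of_le_two_mul hα h
    nlinarith

lemma exp_l1norm_sub_mul_le {θ : ℝ} (hθ : 0 ≤ θ) (m j : Fin N → ℤ) :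
    Real.exp (-θ * l1norm (m - j)) * Real.exp (-θ * l1norm j) ≤ Real.exp (-θ * l1norm m) := by
  rw [← Real.exp_add, Real.exp_le_exp]
  nlinarith [l1norm_le_l1norm_sub_add m j]

def decayProfile (α θ : ℝ) (i : Fin N → ℤ) : ℝ := polyWeight α i * Real.exp (-θ * l1norm i)

lemma decayProfile_pos (α θ : ℝ) (i : Fin N → ℤ) : 0 < decayProfile α θ i :=
  mul_pos (polyWeight_pos α i) (Real.exp_pos _)

lemma decayProfile_le_polyWeight (α : ℝ) {θ : ℝ} (hθ : 0 ≤ θ) (i : Fin N → ℤ) :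
    decayProfile α θ i ≤ polyWeight α i :=
  mul_le_of_le_one_right (polyWeight_pos α i).le
    (Real.exp_le_one_iff.mpr (by nlinarith [l1norm_nonneg i]))

lemma summable_decayProfile {α θ : ℝ} (hN : 1 ≤ N) (hα : (N : ℝ) < α) (hθ : 0 ≤ θ) :
    Summable (decayProfile (N := N) α θ) :=
  (summable_polyWeight hN hα).of_nonneg_of_le (fun i => (decayProfile_pos α θ i).le)
    (decayProfile_le_polyWeight α hθ)

lemma decayProfile_sub_mul_le {α θ : ℝ} (hα : 0 ≤ α) (hθ : 0 ≤ θ) (m j : Fin N → ℤ) :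
    decayProfile α θ (m - j) * decayProfile α θ j ≤
      2 ^ α * decayProfile α θ m * (polyWeight α j + polyWeight α (m - j)) := by
  have hpoly := polyWeight_sub_mul_le hα m j
  have hexp := exp_l1norm_sub_mul_le hθ m j
  have hψm := polyWeight_pos α m
  have hψj := polyWeight_pos α j
  have hψmj := polyWeight_pos α (m - j)
  calc decayProfile α θ (m - j) * decayProfile α θ j
      = polyWeight α (m - j) * polyWeight α j *
          (Real.exp (-θ * l1norm (m - j)) * Real.exp (-θ * l1norm j)) := by
        unfold decayProfile; ring
    _ ≤ 2 ^ α * polyWeight α m * (polyWeight α j + polyWeight α (m - j)) *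
          Real.exp (-θ * l1norm m) := by
        exact mul_le_mul hpoly hexp (by positivity) (by positivity)
    _ = 2 ^ α * decayProfile α θ m * (polyWeight α j + polyWeight α (m - j)) := by
        unfold decayProfile; ring

lemma tsum_decayProfile_sub_mul_le {α θ : ℝ} (hN : 1 ≤ N) (hα : (N : ℝ) < α) (hθ : 0 ≤ θ)
    (m : Fin N → ℤ) :
    ∑' j, decayProfile α θ (m - j) * decayProfile α θ j ≤
      2 ^ α * (2 * ∑' i : Fin N → ℤ, polyWeight α i) * decayProfile α θ m := by
  have hψ := summable_polyWeight hN hα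
  have hψ_sub : Summable fun j => polyWeight α (m - j) := (Equiv.subLeft m).summable_iff.mpr hψ
  have hbound := decayProfile_sub_mul_le ((Nat.cast_nonneg N).trans hα.le) hθ m
  have hmajorant := (hψ.add hψ_sub).mul_left (2 ^ α * decayProfile α θ m)
  calc ∑' j, decayProfile α θ (m - j) * decayProfile α θ j
      ≤ ∑' j, 2 ^ α * decayProfile α θ m * (polyWeight α j + polyWeight α (m - j)) :=
        Summable.tsum_le_tsum hbound
          (hmajorant.of_nonneg_of_le
            (fun j => (mul_pos (decayProfile_pos α θ _) (decayProfile_pos α θ j)).le) hbound)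
          hmajorant
    _ = 2 ^ α * (2 * ∑' i, polyWeight α i) * decayProfile α θ m := by
        have hshift : ∑' j, polyWeight α (m - j) = ∑' i, polyWeight α i :=
          (Equiv.subLeft m).tsum_eq (polyWeight α)
        rw [tsum_mul_left, hψ.tsum_add hψ_sub, hshift]
        ring

lemma decayProfile_eq_ite (α θ : ℝ) (i : Fin N → ℤ) :
    decayProfile α θ i = if i = 0 then 1 else l1norm i ^ (-α) * Real.exp (-θ * l1norm i) := by
  split_ifs with hi
  · simp [hi, decayProfile]
  · rw [decayProfile, polyWeight, l1bracket, max_eq_right (one_le_l1norm hi)]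

end Lattice

lemma tsum_sub_mul_sub_eq {N : ℕ} (Γ : (Fin N → ℤ) → ℝ) (i k : Fin N → ℤ) :
    ∑' j, Γ (i - j) * Γ (j - k) = ∑' j, Γ (i - k - j) * Γ j := by
  rw [← (Equiv.addRight k).tsum_eq]
  simp only [Equiv.coe_addRight, add_sub_cancel_right, sub_add_eq_sub_sub_swap]

lemma isDecayFunction_inv_mul {N : ℕ} {Γ : (Fin N → ℤ) → ℝ} (hpos : ∀ i, 0 < Γ i)
    (hsum : Summable Γ) {C : ℝ} (hmass : ∑' j, Γ j ≤ C)
    (hconv : ∀ m, ∑' j, Γ (m - j) * Γ j ≤ C * Γ m) :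
    IsDecayFunction fun i => C⁻¹ * Γ i := by
  have hC : 0 < C := (hsum.tsum_pos (fun i => (hpos i).le) 0 (hpos 0)).trans_le hmass
  refine ⟨fun i => mul_pos (inv_pos.mpr hC) (hpos i), hsum.mul_left _, ?_, fun i k => ?_⟩
  · rw [tsum_mul_left]
    exact (inv_mul_le_one₀ hC).mpr hmass
  · calc ∑' j, C⁻¹ * Γ (i - j) * (C⁻¹ * Γ (j - k))
        = C⁻¹ * (C⁻¹ * ∑' j, Γ (i - k - j) * Γ j) := by
          rw [← tsum_sub_mul_sub_eq, ← tsum_mul_left, ← tsum_mul_left]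
          exact tsum_congr fun j => by ring
      _ ≤ C⁻¹ * (C⁻¹ * (C * Γ (i - k))) := by
          gcongr
          exact hconv (i - k)
      _ = C⁻¹ * Γ (i - k) := by field_simp

/-- For every `α > N` and `θ ≥ 0` there is `a > 0` such that
`Γ(i) = a |i|^{-α} e^{-θ|i|}` (with `Γ(0) = a`) is a decay function. -/
theorem statement0 (N : ℕ) (hN : 1 ≤ N) (α θ : ℝ) (hα : (N : ℝ) < α) (hθ : 0 ≤ θ) :
    ∃ a : ℝ, 0 < a ∧ IsDecayFunction (fun i : Fin N → ℤ =>
      if i = 0 then a else a * (l1norm i) ^ (-α) * Real.exp (-θ * l1norm i)) := by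
  have hψ := summable_polyWeight hN hα
  set S := ∑' i : Fin N → ℤ, polyWeight α i
  have hS : 1 ≤ S := by
    simpa using hψ.le_tsum 0 fun j _ => (polyWeight_pos α j).le
  have hSC : S ≤ 2 ^ α * (2 * S) := by
    have : 1 ≤ (2 : ℝ) ^ α := Real.one_le_rpow one_le_two ((Nat.cast_nonneg N).trans hα.le)
    nlinarith
  have hmass : ∑' i, decayProfile α θ i ≤ 2 ^ α * (2 * S) :=
    ((summable_decayProfile hN hα hθ).tsum_le_tsum (decayProfile_le_polyWeight α hθ) hψ).trans hSC
  refine ⟨(2 ^ α * (2 * S))⁻¹, by positivity, ?_⟩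
  convert isDecayFunction_inv_mul (decayProfile_pos α θ) (summable_decayProfile hN hα hθ) hmass
    (tsum_decayProfile_sub_mul_le hN hα hθ) using 2 with i
  rw [decayProfile_eq_ite]
  split_ifs <;> ring
end
end

section
/- Let Γ be a decay function on ℤ^N, let B = (B_{i,p,q})_{i,p,q∈ℤ^N} be a real 3-index array satisfying |B_{i,p,q}| ≤ b·min(Γ(i−p), Γ(i−q)) for all i,p,q, and let A¹ = (A¹_{pj}) and A² = (A²_{qk}) be real matrices with |A¹_{pj}| ≤ a₁Γ(p−j) and |A²_{qk}| ≤ a₂Γ(q−k) for all indices. Then for all i,j,k the double series C_{i,j,k} = ∑_{p,q∈ℤ^N} B_{i,p,q}A¹_{pj}A²_{qk} converges absolutely and |C_{i,j,k}| ≤ b·a₁·a₂·min(Γ(i−j), Γ(i−k)). -/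
open scoped BigOperators

noncomputable section

set_option maxHeartbeats 1000000 in
/-- Composition of a bilinear array with decay with two matrices with decay:
`C_{ijk} = ∑_{p,q} B_{ipq} A¹_{pj} A²_{qk}` converges absolutely and satisfies
`|C_{ijk}| ≤ b a₁ a₂ min(Γ(i−j), Γ(i−k))`. -/
theorem statement5 {N : ℕ} (Γ : (Fin N → ℤ) → ℝ) (hΓ : IsDecayFunction Γ)
    (B : (Fin N → ℤ) → (Fin N → ℤ) → (Fin N → ℤ) → ℝ)
    (A₁ A₂ : (Fin N → ℤ) → (Fin N → ℤ) → ℝ)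
    (b a₁ a₂ : ℝ) (hb : 0 ≤ b) (ha₁ : 0 ≤ a₁) (ha₂ : 0 ≤ a₂)
    (hB : ∀ i p q, |B i p q| ≤ b * min (Γ (i - p)) (Γ (i - q)))
    (hA₁ : ∀ p j, |A₁ p j| ≤ a₁ * Γ (p - j))
    (hA₂ : ∀ q k, |A₂ q k| ≤ a₂ * Γ (q - k)) :
    ∀ i j k : Fin N → ℤ,
      Summable (fun pq : (Fin N → ℤ) × (Fin N → ℤ) =>
        |B i pq.1 pq.2 * A₁ pq.1 j * A₂ pq.2 k|) ∧
      |∑' pq : (Fin N → ℤ) × (Fin N → ℤ), B i pq.1 pq.2 * A₁ pq.1 j * A₂ pq.2 k| ≤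
        b * a₁ * a₂ * min (Γ (i - j)) (Γ (i - k)) := by
  obtain ⟨hpos, hsum, htsum, hconv⟩ := hΓ
  have hle1 : ∀ x, Γ x ≤ 1 := fun x =>
    le_trans (Summable.le_tsum hsum x (fun y _ => (hpos y).le)) htsum
  have hshift : ∀ c : Fin N → ℤ, Summable (fun p => Γ (p - c)) := fun c =>
    (Equiv.subRight c).summable_iff.mpr hsum
  have hshift' : ∀ c : Fin N → ℤ, Summable (fun p => Γ (c - p)) := fun c =>
    (Equiv.subLeft c).summable_iff.mpr hsum
  have htsumshift : ∀ c, (∑' p, Γ (p - c)) ≤ 1 := fun c => by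
    calc (∑' p, Γ (p - c)) = ∑' p, Γ p := (Equiv.subRight c).tsum_eq Γ
    _ ≤ 1 := htsum
  have hSp : ∀ u v : Fin N → ℤ, Summable (fun p => Γ (u - p) * Γ (p - v)) := fun u v =>
    (hshift' u).of_nonneg_of_le (fun p => mul_nonneg (hpos _).le (hpos _).le)
      (fun p => by nlinarith [hpos (u - p), hpos (p - v), hle1 (p - v)])
  intro i j k
  have nn1 : ∀ p : Fin N → ℤ, 0 ≤ b * a₁ * (Γ (i - p) * Γ (p - j)) := fun p =>
    mul_nonneg (mul_nonneg hb ha₁) (mul_nonneg (hpos _).le (hpos _).le)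
  have nn2 : ∀ q : Fin N → ℤ, 0 ≤ a₂ * Γ (q - k) := fun q =>
    mul_nonneg ha₂ (hpos _).le
  have nn3 : ∀ p : Fin N → ℤ, 0 ≤ a₁ * Γ (p - j) := fun p =>
    mul_nonneg ha₁ (hpos _).le
  have nn4 : ∀ q : Fin N → ℤ, 0 ≤ b * a₂ * (Γ (i - q) * Γ (q - k)) := fun q =>
    mul_nonneg (mul_nonneg hb ha₂) (mul_nonneg (hpos _).le (hpos _).le)
  have sf1 : Summable (fun p => b * a₁ * (Γ (i - p) * Γ (p - j))) :=
    (hSp i j).mul_left (b * a₁)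
  have sf2 : Summable (fun q => a₂ * Γ (q - k)) := (hshift k).mul_left a₂
  have sf3 : Summable (fun p => a₁ * Γ (p - j)) := (hshift j).mul_left a₁
  have sf4 : Summable (fun q => b * a₂ * (Γ (i - q) * Γ (q - k))) :=
    (hSp i k).mul_left (b * a₂)
  have hg₁s : Summable (fun pq : (Fin N → ℤ) × (Fin N → ℤ) =>
      (b * a₁ * (Γ (i - pq.1) * Γ (pq.1 - j))) * (a₂ * Γ (pq.2 - k))) :=
    Summable.mul_of_nonneg sf1 sf2 nn1 nn2
  have hg₂s : Summable (fun pq : (Fin N → ℤ) × (Fin N → ℤ) =>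
      (a₁ * Γ (pq.1 - j)) * (b * a₂ * (Γ (i - pq.2) * Γ (pq.2 - k)))) :=
    Summable.mul_of_nonneg sf3 sf4 nn3 nn4
  have habs : ∀ pq : (Fin N → ℤ) × (Fin N → ℤ),
      |B i pq.1 pq.2 * A₁ pq.1 j * A₂ pq.2 k| =
        |B i pq.1 pq.2| * |A₁ pq.1 j| * |A₂ pq.2 k| := by
    intro pq; rw [abs_mul, abs_mul]
  have hbd1 : ∀ pq : (Fin N → ℤ) × (Fin N → ℤ),
      |B i pq.1 pq.2 * A₁ pq.1 j * A₂ pq.2 k| ≤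
        (b * a₁ * (Γ (i - pq.1) * Γ (pq.1 - j))) * (a₂ * Γ (pq.2 - k)) := by
    intro pq
    rw [habs]
    have h1 : |B i pq.1 pq.2| ≤ b * Γ (i - pq.1) :=
      (hB i pq.1 pq.2).trans (by
        have := min_le_left (Γ (i - pq.1)) (Γ (i - pq.2)); nlinarith)
    have h2 := hA₁ pq.1 j
    have h3 := hA₂ pq.2 k
    calc |B i pq.1 pq.2| * |A₁ pq.1 j| * |A₂ pq.2 k|
        ≤ (b * Γ (i - pq.1)) * (a₁ * Γ (pq.1 - j)) * (a₂ * Γ (pq.2 - k)) :=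
          mul_le_mul (mul_le_mul h1 h2 (abs_nonneg _)
              (mul_nonneg hb (hpos _).le)) h3 (abs_nonneg _)
            (mul_nonneg (mul_nonneg hb (hpos _).le) (nn3 _))
      _ = (b * a₁ * (Γ (i - pq.1) * Γ (pq.1 - j))) * (a₂ * Γ (pq.2 - k)) := by ring
  have hbd2 : ∀ pq : (Fin N → ℤ) × (Fin N → ℤ),
      |B i pq.1 pq.2 * A₁ pq.1 j * A₂ pq.2 k| ≤
        (a₁ * Γ (pq.1 - j)) * (b * a₂ * (Γ (i - pq.2) * Γ (pq.2 - k))) := by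
    intro pq
    rw [habs]
    have h1 : |B i pq.1 pq.2| ≤ b * Γ (i - pq.2) :=
      (hB i pq.1 pq.2).trans (by
        have := min_le_right (Γ (i - pq.1)) (Γ (i - pq.2)); nlinarith)
    have h2 := hA₁ pq.1 j
    have h3 := hA₂ pq.2 k
    calc |B i pq.1 pq.2| * |A₁ pq.1 j| * |A₂ pq.2 k|
        ≤ (b * Γ (i - pq.2)) * (a₁ * Γ (pq.1 - j)) * (a₂ * Γ (pq.2 - k)) :=
          mul_le_mul (mul_le_mul h1 h2 (abs_nonneg _)
              (mul_nonneg hb (hpos _).le)) h3 (abs_nonneg _)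
            (mul_nonneg (mul_nonneg hb (hpos _).le) (nn3 _))
      _ = (a₁ * Γ (pq.1 - j)) * (b * a₂ * (Γ (i - pq.2) * Γ (pq.2 - k))) := by ring
  have hsummable : Summable (fun pq : (Fin N → ℤ) × (Fin N → ℤ) =>
      |B i pq.1 pq.2 * A₁ pq.1 j * A₂ pq.2 k|) :=
    hg₁s.of_nonneg_of_le (fun pq => abs_nonneg _) hbd1
  refine ⟨hsummable, ?_⟩
  have habs_le : |∑' pq : (Fin N → ℤ) × (Fin N → ℤ),
      B i pq.1 pq.2 * A₁ pq.1 j * A₂ pq.2 k| ≤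
      ∑' pq : (Fin N → ℤ) × (Fin N → ℤ), |B i pq.1 pq.2 * A₁ pq.1 j * A₂ pq.2 k| := by
    have := norm_tsum_le_tsum_norm (f := fun pq : (Fin N → ℤ) × (Fin N → ℤ) =>
        B i pq.1 pq.2 * A₁ pq.1 j * A₂ pq.2 k)
      (hsummable.congr fun pq => (Real.norm_eq_abs _).symm)
    simpa only [Real.norm_eq_abs] using this
  have htg₁ : (∑' pq : (Fin N → ℤ) × (Fin N → ℤ),
      (b * a₁ * (Γ (i - pq.1) * Γ (pq.1 - j))) * (a₂ * Γ (pq.2 - k)))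
      ≤ b * a₁ * a₂ * Γ (i - j) := by
    have heq : (∑' pq : (Fin N → ℤ) × (Fin N → ℤ),
        (b * a₁ * (Γ (i - pq.1) * Γ (pq.1 - j))) * (a₂ * Γ (pq.2 - k))) =
        (∑' p, b * a₁ * (Γ (i - p) * Γ (p - j))) * (∑' q, a₂ * Γ (q - k)) :=
      (tsum_mul_tsum_of_summable_norm
        (sf1.congr fun p => (Real.norm_of_nonneg (nn1 p)).symm)
        (sf2.congr fun q => (Real.norm_of_nonneg (nn2 q)).symm)).symm
    rw [heq, tsum_mul_left, tsum_mul_left]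
    have h1 : (∑' p, Γ (i - p) * Γ (p - j)) ≤ Γ (i - j) := hconv i j
    have h2 : (∑' q, Γ (q - k)) ≤ 1 := htsumshift k
    have h1' : (0:ℝ) ≤ ∑' p, Γ (i - p) * Γ (p - j) :=
      tsum_nonneg (fun p => mul_nonneg (hpos _).le (hpos _).le)
    have h2' : (0:ℝ) ≤ ∑' q, Γ (q - k) := tsum_nonneg (fun q => (hpos _).le)
    calc (b * a₁ * ∑' p, Γ (i - p) * Γ (p - j)) * (a₂ * ∑' q, Γ (q - k))
        ≤ (b * a₁ * Γ (i - j)) * (a₂ * ∑' q, Γ (q - k)) :=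
          mul_le_mul_of_nonneg_right
            (mul_le_mul_of_nonneg_left h1 (mul_nonneg hb ha₁))
            (mul_nonneg ha₂ h2')
      _ ≤ (b * a₁ * Γ (i - j)) * (a₂ * 1) :=
          mul_le_mul_of_nonneg_left (mul_le_mul_of_nonneg_left h2 ha₂)
            (mul_nonneg (mul_nonneg hb ha₁) (hpos _).le)
      _ = b * a₁ * a₂ * Γ (i - j) := by ring
  have htg₂ : (∑' pq : (Fin N → ℤ) × (Fin N → ℤ),
      (a₁ * Γ (pq.1 - j)) * (b * a₂ * (Γ (i - pq.2) * Γ (pq.2 - k))))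
      ≤ b * a₁ * a₂ * Γ (i - k) := by
    have heq : (∑' pq : (Fin N → ℤ) × (Fin N → ℤ),
        (a₁ * Γ (pq.1 - j)) * (b * a₂ * (Γ (i - pq.2) * Γ (pq.2 - k)))) =
        (∑' p, a₁ * Γ (p - j)) * (∑' q, b * a₂ * (Γ (i - q) * Γ (q - k))) :=
      (tsum_mul_tsum_of_summable_norm
        (sf3.congr fun p => (Real.norm_of_nonneg (nn3 p)).symm)
        (sf4.congr fun q => (Real.norm_of_nonneg (nn4 q)).symm)).symm
    rw [heq, tsum_mul_left, tsum_mul_left]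
    have h1 : (∑' q, Γ (i - q) * Γ (q - k)) ≤ Γ (i - k) := hconv i k
    have h2 : (∑' p, Γ (p - j)) ≤ 1 := htsumshift j
    have h1' : (0:ℝ) ≤ ∑' q, Γ (i - q) * Γ (q - k) :=
      tsum_nonneg (fun q => mul_nonneg (hpos _).le (hpos _).le)
    have h2' : (0:ℝ) ≤ ∑' p, Γ (p - j) := tsum_nonneg (fun p => (hpos _).le)
    calc (a₁ * ∑' p, Γ (p - j)) * (b * a₂ * ∑' q, Γ (i - q) * Γ (q - k))
        ≤ (a₁ * ∑' p, Γ (p - j)) * (b * a₂ * Γ (i - k)) :=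
          mul_le_mul_of_nonneg_left
            (mul_le_mul_of_nonneg_left h1 (mul_nonneg hb ha₂))
            (mul_nonneg ha₁ h2')
      _ ≤ (a₁ * 1) * (b * a₂ * Γ (i - k)) :=
          mul_le_mul_of_nonneg_right (mul_le_mul_of_nonneg_left h2 ha₁)
            (mul_nonneg (mul_nonneg hb ha₂) (hpos _).le)
      _ = b * a₁ * a₂ * Γ (i - k) := by ring
  rw [mul_min_of_nonneg _ _ (mul_nonneg (mul_nonneg hb ha₁) ha₂)]
  refine habs_le.trans (le_min ?_ ?_)
  · exact (Summable.tsum_le_tsum hbd1 hsummable hg₁s).trans htg₁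
  · exact (Summable.tsum_le_tsum hbd2 hsummable hg₂s).trans htg₂
end
end

section
/- Let l ≥ 1 be an integer, L > 0 and ν > l. There exists a constant C depending only on l, ν and L such that for every κ > 0 the Lebesgue measure of the set {ω ∈ [−L,L]^l : there exist k ∈ ℤ^l∖{0} and m ∈ ℤ with |ω·k − m| < κ^{−1}|k|^{−ν}} is at most C·κ^{−1}. -/
/-!
For fixed `k ≠ 0`, slice the cube along a coordinate `j` with `k j ≠ 0`: on each line, `ω·k`
lies within `ε` of an integer on at most `2L|k j| + 3` intervals of length `2ε/|k j|`, so by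
Fubini the resonant set of `k` has measure `O(ε)` when `ε ≤ 1`. With `ε = κ⁻¹|k|^{-ν}`, the
bound `|k|^{-ν} ≤ ∏ₛ max(1, |kₛ|)^{-ν/l}` turns the sum over `k ∈ ℤ^l` into the `l`-th power
of a one-dimensional series, which converges since `ν/l > 1`. For `κ < 1` the volume of the
cube is already a bound.
-/

open MeasureTheory
open scoped ENNReal

def NearInt (ε t : ℝ) : Prop := ∃ m : ℤ, |t - m| < ε

lemma card_Icc_ceil_floor_le {u v : ℝ} (h : u ≤ v) :
    ((Finset.Icc ⌈u⌉ ⌊v⌋).card : ℝ) ≤ v - u + 1 := by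
  rw [Int.card_Icc]
  have hv : (⌊v⌋ : ℝ) ≤ v := Int.floor_le v
  have hu : u ≤ (⌈u⌉ : ℝ) := Int.le_ceil u
  rcases le_or_gt (⌊v⌋ + 1 - ⌈u⌉) 0 with hle | hlt
  · rw [Int.toNat_of_nonpos hle]
    push_cast
    linarith
  · rw [← Int.cast_natCast, Int.toNat_of_nonneg hlt.le]
    push_cast
    linarith

lemma volume_Icc_nearInt_le {L a c ε : ℝ} (hL : 0 ≤ L) (ha : 1 ≤ |a|) (hε₀ : 0 ≤ ε) (hε₁ : ε ≤ 1) :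
    volume {x : ℝ | x ∈ Set.Icc (-L) L ∧ NearInt ε (x * a + c)} ≤
      ENNReal.ofReal ((2 * L + 3) * (2 * ε)) := by
  have ha₀ : 0 < |a| := one_pos.trans_le ha
  have ha₀' : a ≠ 0 := abs_pos.1 ha₀
  set F := Finset.Icc ⌈c - L * |a| - 1⌉ ⌊c + L * |a| + 1⌋
  have hcover : {x : ℝ | x ∈ Set.Icc (-L) L ∧ NearInt ε (x * a + c)} ⊆
      ⋃ m ∈ F, Metric.closedBall (((m : ℝ) - c) / a) (ε / |a|) := by
    rintro x ⟨hx, m, hm⟩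
    have hxa : |x * a| ≤ L * |a| := by
      rw [abs_mul]
      exact mul_le_mul_of_nonneg_right (abs_le.2 hx) (abs_nonneg a)
    obtain ⟨hxa₁, hxa₂⟩ := abs_le.1 hxa
    obtain ⟨hm₁, hm₂⟩ := abs_lt.1 hm
    refine Set.mem_biUnion (x := m) ?_ ?_
    · rw [Finset.mem_coe, Finset.mem_Icc, Int.ceil_le, Int.le_floor]
      constructor <;> linarith
    · rw [Metric.mem_closedBall, Real.dist_eq,
        show x - ((m : ℝ) - c) / a = (x * a + c - m) / a by field_simp; ring, abs_div]
      gcongr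
  have hcard : (F.card : ℝ) ≤ 2 * L * |a| + 3 := by
    have := card_Icc_ceil_floor_le (u := c - L * |a| - 1) (v := c + L * |a| + 1) (by nlinarith)
    linarith
  calc volume {x : ℝ | x ∈ Set.Icc (-L) L ∧ NearInt ε (x * a + c)}
      ≤ ∑ m ∈ F, volume (Metric.closedBall (((m : ℝ) - c) / a) (ε / |a|)) :=
        (measure_mono hcover).trans (measure_biUnion_finset_le F _)
    _ = ENNReal.ofReal (F.card * (2 * (ε / |a|))) := by
        simp [Real.volume_closedBall, ENNReal.ofReal_mul]
    _ ≤ ENNReal.ofReal ((2 * L + 3) * (2 * ε)) := by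
        apply ENNReal.ofReal_le_ofReal
        calc (F.card : ℝ) * (2 * (ε / |a|)) ≤ (2 * L * |a| + 3) * (2 * (ε / |a|)) := by gcongr
          _ = (2 * L + 3 / |a|) * (2 * ε) := by field_simp
          _ ≤ (2 * L + 3) * (2 * ε) := by
              gcongr
              exact div_le_self zero_le_three ha

lemma volume_le_of_fiber_le {n : ℕ} (j : Fin (n + 1)) {S : Set (Fin (n + 1) → ℝ)}
    (hS : MeasurableSet S) {A : Set (Fin n → ℝ)} (hA : MeasurableSet A) {c : ℝ≥0∞}
    (hfib : ∀ y ∈ A, volume {x : ℝ | j.insertNth x y ∈ S} ≤ c)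
    (hout : ∀ y ∉ A, ∀ x : ℝ, j.insertNth x y ∉ S) :
    volume S ≤ c * volume A := by
  have hmp := (measurePreserving_piFinSuccAbove (fun _ : Fin (n + 1) ↦ (volume : Measure ℝ)) j).symm
  have hfib' : ∀ y, volume {x : ℝ | j.insertNth x y ∈ S} ≤ A.indicator (fun _ ↦ c) y := by
    intro y
    by_cases hy : y ∈ A
    · simpa [hy] using hfib y hy
    · simp [hy, hout y hy]
  calc volume S
      = (volume.prod volume) ((MeasurableEquiv.piFinSuccAbove (fun _ ↦ ℝ) j).symm ⁻¹' S) := by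
        rw [volume_pi, ← hmp.measure_preimage hS.nullMeasurableSet]; rfl
    _ = ∫⁻ y, volume {x : ℝ | j.insertNth x y ∈ S} := by
        rw [Measure.prod_apply_symm (hS.preimage (MeasurableEquiv.measurable _))]
        rfl
    _ ≤ ∫⁻ y, A.indicator (fun _ ↦ c) y := lintegral_mono hfib'
    _ = c * volume A := lintegral_indicator_const hA c

def resonantSlab {ι : Type*} [Fintype ι] (L ε : ℝ) (k : ι → ℤ) : Set (ι → ℝ) :=
  {ω | (∀ s, ω s ∈ Set.Icc (-L) L) ∧ NearInt ε (∑ s, ω s * k s)}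

lemma measurableSet_resonantSlab {ι : Type*} [Fintype ι] (L ε : ℝ) (k : ι → ℤ) :
    MeasurableSet (resonantSlab L ε k) := by
  simp only [resonantSlab, NearInt, Set.ofPred_and, Set.ofPred_forall, Set.ofPred_exists]
  exact (MeasurableSet.iInter fun s ↦ measurableSet_Icc.preimage (measurable_pi_apply s)).inter
    (MeasurableSet.iUnion fun m ↦ measurableSet_lt (by fun_prop) measurable_const)

lemma volume_cube (ι : Type*) [Fintype ι] {L : ℝ} (hL : 0 ≤ L) :
    volume (Set.univ.pi fun _ : ι ↦ Set.Icc (-L) L) =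
      ENNReal.ofReal ((2 * L) ^ Fintype.card ι) := by
  rw [volume_pi_pi, Finset.prod_const, Finset.card_univ, Real.volume_Icc,
    ← ENNReal.ofReal_pow (by linarith), sub_neg_eq_add, ← two_mul]

lemma volume_resonantSlab_le {n : ℕ} {L ε : ℝ} (hL : 0 ≤ L) (hε₀ : 0 ≤ ε) (hε₁ : ε ≤ 1)
    {k : Fin (n + 1) → ℤ} (hk : k ≠ 0) :
    volume (resonantSlab L ε k) ≤ ENNReal.ofReal ((2 * L) ^ n * (2 * L + 3) * (2 * ε)) := by
  obtain ⟨j, hj⟩ := Function.ne_iff.1 hk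
  have hkj : (1 : ℝ) ≤ |(k j : ℝ)| := by exact_mod_cast Int.one_le_abs hj
  calc volume (resonantSlab L ε k)
      ≤ ENNReal.ofReal ((2 * L + 3) * (2 * ε)) *
          volume (Set.univ.pi fun _ : Fin n ↦ Set.Icc (-L) L) := by
        refine volume_le_of_fiber_le j (measurableSet_resonantSlab L ε k)
          (MeasurableSet.univ_pi fun _ ↦ measurableSet_Icc) (fun y hy ↦ ?_) (fun y hy x hx ↦ ?_)
        · refine (measure_mono fun x hx ↦ ?_).trans (volume_Icc_nearInt_le hL hkj hε₀ hε₁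
            (c := ∑ t, y t * k (j.succAbove t)))
          obtain ⟨hbox, hnear⟩ := hx
          refine ⟨by simpa using hbox j, ?_⟩
          simpa [resonantSlab, Fin.sum_univ_succAbove _ j] using hnear
        · exact hy (Set.mem_univ_pi.2 fun t ↦ by simpa using hx.1 (j.succAbove t))
    _ = ENNReal.ofReal ((2 * L) ^ n * (2 * L + 3) * (2 * ε)) := by
        rw [volume_cube _ hL, Fintype.card_fin, ← ENNReal.ofReal_mul (by positivity)]
        ring_nf

lemma ENNReal.tsum_fin_pi_prod {α : Type*} (w : α → ℝ≥0∞) (n : ℕ) :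
    ∑' k : Fin n → α, ∏ s, w (k s) = (∑' a, w a) ^ n := by
  induction n with
  | zero => simp
  | succ n ih =>
    rw [← (Fin.consEquiv fun _ ↦ α).tsum_eq, ENNReal.tsum_prod', pow_succ', ← ih,
      ← ENNReal.tsum_mul_right]
    refine tsum_congr fun a ↦ ?_
    rw [← ENNReal.tsum_mul_left]
    refine tsum_congr fun k ↦ ?_
    simp [Fin.consEquiv, Fin.prod_univ_succ]

lemma tsum_ofReal_max_one_abs_rpow_ne_top {p : ℝ} (hp : 1 < p) :
    ∑' j : ℤ, ENNReal.ofReal (max 1 |(j : ℝ)| ^ (-p)) ≠ ⊤ := by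
  have hsum : Summable fun j : ℤ ↦ max 1 |(j : ℝ)| ^ (-p) := by
    refine ((Real.summable_abs_int_rpow hp).update 0 1).congr fun j ↦ ?_
    rcases eq_or_ne j 0 with rfl | hj
    · simp
    · have : (1 : ℝ) ≤ |(j : ℝ)| := by exact_mod_cast Int.one_le_abs hj
      simp [hj, max_eq_right this]
  rw [← ENNReal.ofReal_tsum_of_nonneg (fun j ↦ by positivity) hsum]
  exact ENNReal.ofReal_ne_top

lemma one_le_sum_abs_of_ne_zero {ι : Type*} [Fintype ι] {k : ι → ℤ} (hk : k ≠ 0) :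
    1 ≤ ∑ s, |(k s : ℝ)| := by
  obtain ⟨j, hj⟩ := Function.ne_iff.1 hk
  calc (1 : ℝ) ≤ |(k j : ℝ)| := by exact_mod_cast Int.one_le_abs hj
    _ ≤ ∑ s, |(k s : ℝ)| := Finset.single_le_sum (f := fun s ↦ |(k s : ℝ)|)
        (fun _ _ ↦ abs_nonneg _) (Finset.mem_univ j)

lemma rpow_neg_sum_abs_le_prod {ι : Type*} [Fintype ι] {k : ι → ℤ} (hk : k ≠ 0) {ν : ℝ}
    (hν : 0 ≤ ν) :
    (∑ s, |(k s : ℝ)|) ^ (-ν) ≤ ∏ s, max 1 |(k s : ℝ)| ^ (-(ν / Fintype.card ι)) := by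
  obtain ⟨j, -⟩ := Function.ne_iff.1 hk
  have hcard : (Fintype.card ι : ℝ) ≠ 0 := by
    have := Fintype.card_pos_iff.2 ⟨j⟩
    positivity
  have hr := one_le_sum_abs_of_ne_zero hk
  set r := ∑ s, |(k s : ℝ)|
  have hle : ∀ s, |(k s : ℝ)| ≤ r := fun s ↦
    Finset.single_le_sum (f := fun t ↦ |(k t : ℝ)|) (fun _ _ ↦ abs_nonneg _) (Finset.mem_univ s)
  calc r ^ (-ν) = ∏ _s : ι, r ^ (-(ν / Fintype.card ι)) := by
        rw [Finset.prod_const, Finset.card_univ, ← Real.rpow_natCast, ← Real.rpow_mul (by linarith)]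
        field_simp
    _ ≤ ∏ s, max 1 |(k s : ℝ)| ^ (-(ν / Fintype.card ι)) := by
        refine Finset.prod_le_prod (fun _ _ ↦ by positivity) fun s _ ↦ ?_
        exact Real.rpow_le_rpow_of_nonpos (one_pos.trans_le (le_max_left _ _))
          (max_le hr (hle s)) (neg_nonpos.2 (by positivity))

lemma volume_resonantSlab_le_prod {n : ℕ} {L κ ν : ℝ} (hL : 0 ≤ L) (hκ : 1 ≤ κ) (hν : 0 ≤ ν)
    {k : Fin (n + 1) → ℤ} (hk : k ≠ 0) :
    volume (resonantSlab L (κ⁻¹ * (∑ s, |(k s : ℝ)|) ^ (-ν)) k) ≤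
      ENNReal.ofReal ((2 * L) ^ n * (2 * L + 3) * 2 / κ) *
        ∏ s, ENNReal.ofReal (max 1 |(k s : ℝ)| ^ (-(ν / (n + 1 : ℕ)))) := by
  have hr := one_le_sum_abs_of_ne_zero hk
  have hε₀ : 0 ≤ κ⁻¹ * (∑ s, |(k s : ℝ)|) ^ (-ν) := by positivity
  have hε₁ : κ⁻¹ * (∑ s, |(k s : ℝ)|) ^ (-ν) ≤ 1 :=
    mul_le_one₀ (inv_le_one_of_one_le₀ hκ) (by positivity)
      (Real.rpow_le_one_of_one_le_of_nonpos hr (neg_nonpos.2 hν))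
  have hprod := rpow_neg_sum_abs_le_prod hk hν
  rw [Fintype.card_fin] at hprod
  calc _ ≤ ENNReal.ofReal ((2 * L) ^ n * (2 * L + 3) * (2 * (κ⁻¹ * (∑ s, |(k s : ℝ)|) ^ (-ν)))) :=
        volume_resonantSlab_le hL hε₀ hε₁ hk
    _ = ENNReal.ofReal ((2 * L) ^ n * (2 * L + 3) * 2 / κ * (∑ s, |(k s : ℝ)|) ^ (-ν)) := by
        ring_nf
    _ ≤ _ := by
        rw [← ENNReal.ofReal_prod_of_nonneg (fun _ _ ↦ by positivity),
          ← ENNReal.ofReal_mul (by positivity)]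
        gcongr

/-- Measure of near-resonant frequencies: for `ν > l` there is `C = C(l,ν,L)` such
that for every `κ > 0`, the set of `ω ∈ [−L,L]^l` failing the Diophantine condition
`|ω·k − m| ≥ κ⁻¹|k|^{−ν}` for some `k ≠ 0`, `m ∈ ℤ`, has measure at most `C/κ`. -/
theorem statement10 (l : ℕ) (hl : 1 ≤ l) (L ν : ℝ) (hL : 0 < L) (hν : (l : ℝ) < ν) :
    ∃ C : ℝ, 0 < C ∧ ∀ κ : ℝ, 0 < κ →
      volume {ω : Fin l → ℝ |
        (∀ s, ω s ∈ Set.Icc (-L) L) ∧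
        ∃ k : Fin l → ℤ, k ≠ 0 ∧ ∃ m : ℤ,
          |(∑ s, ω s * k s) - m| < κ⁻¹ * (∑ s, |(k s : ℝ)|) ^ (-ν)} ≤
      ENNReal.ofReal (C / κ) := by
  obtain ⟨n, rfl⟩ : ∃ n, l = n + 1 := ⟨l - 1, by omega⟩
  have hp : 1 < ν / (n + 1 : ℕ) := (one_lt_div (by positivity)).2 hν
  let w (j : ℤ) : ℝ≥0∞ := ENNReal.ofReal (max 1 |(j : ℝ)| ^ (-(ν / (n + 1 : ℕ))))
  let W := (∑' j, w j) ^ (n + 1)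
  have hW : W ≠ ⊤ := ENNReal.pow_ne_top (tsum_ofReal_max_one_abs_rpow_ne_top hp)
  let D := (2 * L) ^ n * (2 * L + 3) * 2
  refine ⟨max ((2 * L) ^ (n + 1)) (D * W.toReal), lt_max_of_lt_left (by positivity),
    fun κ hκ ↦ ?_⟩
  rcases lt_or_ge κ 1 with hκ₁ | hκ₁
  · calc _ ≤ volume (Set.univ.pi fun _ : Fin (n + 1) ↦ Set.Icc (-L) L) :=
          measure_mono fun ω hω ↦ Set.mem_univ_pi.2 hω.1
      _ = ENNReal.ofReal ((2 * L) ^ (n + 1)) := by rw [volume_cube _ hL.le, Fintype.card_fin]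
      _ ≤ _ := ENNReal.ofReal_le_ofReal
          ((le_max_left _ _).trans (le_div_self (by positivity) hκ hκ₁.le))
  have hν₀ : 0 ≤ ν := le_trans (by positivity) hν.le
  let ε (k : Fin (n + 1) → ℤ) : ℝ := κ⁻¹ * (∑ s, |(k s : ℝ)|) ^ (-ν)
  calc _ ≤ volume (⋃ k ∈ {k : Fin (n + 1) → ℤ | k ≠ 0}, resonantSlab L (ε k) k) :=
        measure_mono <| by
          rintro ω ⟨hbox, k, hk, hnear⟩
          exact Set.mem_biUnion hk ⟨hbox, hnear⟩
    _ ≤ ∑' k : {k : Fin (n + 1) → ℤ | k ≠ 0}, volume (resonantSlab L (ε k.1) k.1) :=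
        measure_biUnion_le _ (Set.to_countable _) _
    _ ≤ ∑' k : {k : Fin (n + 1) → ℤ | k ≠ 0}, ENNReal.ofReal (D / κ) * ∏ s, w (k.1 s) :=
        ENNReal.tsum_le_tsum fun k ↦ volume_resonantSlab_le_prod hL.le hκ₁ hν₀ k.2
    _ ≤ ∑' k : Fin (n + 1) → ℤ, ENNReal.ofReal (D / κ) * ∏ s, w (k s) :=
        ENNReal.tsum_comp_le_tsum_of_injective Subtype.val_injective _
    _ = ENNReal.ofReal (D / κ) * ENNReal.ofReal W.toReal := by
        rw [ENNReal.tsum_mul_left, ENNReal.tsum_fin_pi_prod, ENNReal.ofReal_toReal hW]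
    _ = ENNReal.ofReal (D * W.toReal / κ) := by
        rw [← ENNReal.ofReal_mul (by positivity), div_mul_eq_mul_div]
    _ ≤ _ := by gcongr; exact le_max_right _ _
end

section
/- (Composition of a localized vector with a decay map vanishing at the origin) Let Γ be a decay function on ℤ^N, c = (c_1,…,c_R) ∈ (ℤ^N)^R, and let B ⊆ ℓ∞(ℤ^N;ℝ) be an open set containing 0 that is star-shaped with respect to 0. Let F = (F_i)_{i∈ℤ^N} with F_i : B → ℝ Fréchet differentiable, F_i(0) = 0 for all i, and suppose that for every x ∈ B the derivative is given by a matrix: DF_i(x)u = ∑_{j∈ℤ^N} a_{ij}(x)u_j with |a_{ij}(x)| ≤ g·Γ(i−j) for all i, j, x. Then for every x ∈ B with |x_p| ≤ κ·max_{1≤j≤R} Γ(p−c_j) for all p ∈ ℤ^N, one has |F_i(x)| ≤ R·g·κ·max_{1≤j≤R} Γ(i−c_j) for every i ∈ ℤ^N. -/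
open scoped BigOperators

noncomputable section

/-- The lattice `ℤ^N`. -/
abbrev Idx (N : ℕ) := Fin N → ℤ

/-- `ℓ∞(ℤ^N; ℝ)`, the Banach space of bounded real families over the lattice. -/
abbrev LinfR (N : ℕ) := lp (fun _ : Idx N => ℝ) ⊤

/-- `max_{1 ≤ j ≤ R} Γ(i − c_j)`. -/
noncomputable def maxGamma {N R : ℕ} [NeZero R] (Γ : (Fin N → ℤ) → ℝ)
    (c : Fin R → (Fin N → ℤ)) (i : Fin N → ℤ) : ℝ :=
  Finset.univ.sup' ⟨⟨0, Nat.pos_of_ne_zero (NeZero.ne R)⟩, Finset.mem_univ _⟩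
    fun j => Γ (i - c j)

/-- Composition of a localized vector with a decay map vanishing at the origin:
if `F_i(0) = 0`, `DF` has matrix entries bounded by `g Γ(i−j)`, and
`|x_p| ≤ κ max_j Γ(p−c_j)` on a star-shaped neighborhood of `0`, then
`|F_i(x)| ≤ R g κ max_j Γ(i−c_j)`. -/
theorem statement13 {N R : ℕ} [NeZero R] (Γ : Idx N → ℝ) (hΓ : IsDecayFunction Γ)
    (c : Fin R → Idx N)
    (B : Set (LinfR N)) (hopen : IsOpen B) (h0 : (0 : LinfR N) ∈ B)
    (hstar : ∀ x ∈ B, ∀ t : ℝ, t ∈ Set.Icc (0 : ℝ) 1 → t • x ∈ B)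
    (F : Idx N → LinfR N → ℝ) (g κ : ℝ) (hg : 0 ≤ g) (hκ : 0 ≤ κ)
    (hdiff : ∀ i, DifferentiableOn ℝ (F i) B)
    (a : Idx N → Idx N → LinfR N → ℝ)
    (hrep : ∀ i, ∀ x ∈ B, ∀ u : LinfR N,
      fderiv ℝ (F i) x u = ∑' j, a i j x * u j)
    (habs : ∀ i j, ∀ x ∈ B, |a i j x| ≤ g * Γ (i - j))
    (hF0 : ∀ i, F i 0 = 0) :
    ∀ x ∈ B, (∀ p : Idx N, |x p| ≤ κ * maxGamma Γ c p) →
      ∀ i, |F i x| ≤ (R : ℝ) * g * κ * maxGamma Γ c i := by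
  intro x hx hxb i
  have hΓpos := hΓ.1
  have hΓsum := hΓ.2.1
  have hΓ1 : ∀ m, Γ m ≤ 1 := fun m =>
    (Summable.le_tsum hΓsum m fun _ _ => (hΓpos _).le).trans hΓ.2.2.1
  have hshift : ∀ i0 : Idx N, Summable fun j : Idx N => Γ (i0 - j) := fun i0 =>
    hΓsum.comp_injective sub_right_injective
  have k0 : Fin R := ⟨0, Nat.pos_of_ne_zero (NeZero.ne R)⟩
  have hmaxpos : ∀ p, 0 < maxGamma Γ c p := by
    intro p
    exact lt_of_lt_of_le (hΓpos (p - c k0))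
      (Finset.le_sup' (fun j => Γ (p - c j)) (Finset.mem_univ k0))
  have hmaxle : ∀ p, maxGamma Γ c p ≤ ∑ k : Fin R, Γ (p - c k) := by
    intro p
    apply Finset.sup'_le
    intro k _
    exact Finset.single_le_sum (f := fun k => Γ (p - c k)) (fun _ _ => (hΓpos _).le)
      (Finset.mem_univ k)
  have hsum2 : ∀ k : Fin R, Summable fun j : Idx N => Γ (i - j) * Γ (j - c k) := by
    intro k
    refine Summable.of_nonneg_of_le (fun j => mul_nonneg (hΓpos _).le (hΓpos _).le) (fun j => ?_) (hshift i)
    exact mul_le_of_le_one_right (hΓpos _).le (hΓ1 _)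
  have hsumSum : Summable fun j : Idx N => ∑ k : Fin R, Γ (i - j) * Γ (j - c k) :=
    (hasSum_sum fun k _ => (hsum2 k).hasSum).summable
  have hmaxbound : ∀ j : Idx N, Γ (i - j) * maxGamma Γ c j ≤
      ∑ k : Fin R, Γ (i - j) * Γ (j - c k) := by
    intro j
    rw [← Finset.mul_sum]
    exact mul_le_mul_of_nonneg_left (hmaxle j) (hΓpos _).le
  have hsumMax : Summable fun j : Idx N => Γ (i - j) * maxGamma Γ c j :=
    Summable.of_nonneg_of_le (fun j => mul_nonneg (hΓpos _).le (hmaxpos j).le) hmaxbound hsumSum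
  have key : ∀ y ∈ B, |∑' j, a i j y * x j| ≤ (R : ℝ) * g * κ * maxGamma Γ c i := by
    intro y hy
    have hterm : ∀ j, |a i j y * x j| ≤ g * κ * (Γ (i - j) * maxGamma Γ c j) := by
      intro j
      rw [abs_mul]
      calc |a i j y| * |x j| ≤ (g * Γ (i - j)) * (κ * maxGamma Γ c j) :=
            mul_le_mul (habs i j y hy) (hxb j) (abs_nonneg _) (mul_nonneg hg (hΓpos _).le)
        _ = g * κ * (Γ (i - j) * maxGamma Γ c j) := by ring
    have hsumA : Summable fun j : Idx N => |a i j y * x j| :=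
      Summable.of_nonneg_of_le (fun j => abs_nonneg _) hterm (hsumMax.mul_left (g * κ))
    calc |∑' j, a i j y * x j| ≤ ∑' j, |a i j y * x j| := by
          simpa only [Real.norm_eq_abs] using
            norm_tsum_le_tsum_norm (f := fun j : Idx N => a i j y * x j)
              (by simpa only [Real.norm_eq_abs] using hsumA)
      _ ≤ ∑' j, g * κ * (Γ (i - j) * maxGamma Γ c j) :=
          Summable.tsum_le_tsum hterm hsumA (hsumMax.mul_left (g * κ))
      _ = g * κ * ∑' j, Γ (i - j) * maxGamma Γ c j := tsum_mul_left
      _ ≤ g * κ * ∑' j, ∑ k : Fin R, Γ (i - j) * Γ (j - c k) := by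
          apply mul_le_mul_of_nonneg_left _ (mul_nonneg hg hκ)
          exact Summable.tsum_le_tsum hmaxbound hsumMax hsumSum
      _ = g * κ * ∑ k : Fin R, ∑' j, Γ (i - j) * Γ (j - c k) := by
          rw [Summable.tsum_finsetSum fun k _ => hsum2 k]
      _ ≤ g * κ * ∑ k : Fin R, Γ (i - c k) := by
          apply mul_le_mul_of_nonneg_left _ (mul_nonneg hg hκ)
          exact Finset.sum_le_sum fun k _ => hΓ.2.2.2 i (c k)
      _ ≤ g * κ * ∑ k : Fin R, maxGamma Γ c i := by
          apply mul_le_mul_of_nonneg_left _ (mul_nonneg hg hκ)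
          exact Finset.sum_le_sum fun k _ =>
            Finset.le_sup' (fun j => Γ (i - c j)) (Finset.mem_univ k)
      _ = (R : ℝ) * g * κ * maxGamma Γ c i := by
          simp [Finset.sum_const, Finset.card_univ]
          ring
  -- mean value inequality along the segment t ↦ t • x
  have hC : ∀ t ∈ Set.Icc (0 : ℝ) 1,
      HasDerivWithinAt (fun t : ℝ => F i (t • x)) (fderiv ℝ (F i) (t • x) x)
        (Set.Icc 0 1) t := by
    intro t ht
    have hmem := hstar x hx t ht
    have hd : DifferentiableAt ℝ (F i) (t • x) :=
      (hdiff i).differentiableAt (hopen.mem_nhds hmem)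
    have h1 : HasDerivAt (fun t : ℝ => t • x) x t := by
      simpa using (hasDerivAt_id t).smul_const x
    exact (hd.hasFDerivAt.comp_hasDerivAt t h1).hasDerivWithinAt
  have hbound : ∀ t ∈ Set.Ico (0 : ℝ) 1,
      ‖fderiv ℝ (F i) (t • x) x‖ ≤ (R : ℝ) * g * κ * maxGamma Γ c i := by
    intro t ht
    have hmem := hstar x hx t (Set.Ico_subset_Icc_self ht)
    rw [hrep i _ hmem x]
    simpa [Real.norm_eq_abs] using key _ hmem
  have := norm_image_sub_le_of_norm_deriv_le_segment' hC hbound 1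
    (Set.mem_Icc.2 ⟨zero_le_one, le_refl 1⟩)
  simpa [hF0 i, Real.norm_eq_abs] using this
end
end

section
/- (Summation over spatially non-resonant centers) Let N ≥ 1, α > N, a > 0, β > 0, and define Γ_β : ℤ^N → (0,∞) by Γ_β(i) = a|i|^{−α}e^{−β|i|} for i ≠ 0 and Γ_β(0) = a, with |i| the ℓ¹-norm. Let c_1,…,c_r ∈ ℤ^N (r ≥ 2) be pairwise distinct sites that are spatially non-resonant: for every i ∈ ℤ^N there are at most two indices p ≠ q with |c_p − i| = |c_q − i|. Then for every i ∈ ℤ^N, ∑_{k=1}^{r} Γ_β(i−c_k) < (2/(1−e^{−β}))·max_{1≤k≤r} Γ_β(i−c_k). -/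
/-!
`Γ_β` depends only on the ℓ¹-distance `n = |i|` and decays at least geometrically in it:
`Γ_β` at distance `n` is at most `Γ_β` at distance `m ≤ n` times `e^{-β(n-m)}`. Measuring the
distances to `i` from the nearest center, each term is at most `max_k Γ_β(i - c_k)` times
`e^{-β j}` for its shifted distance `j`, and non-resonance says that every `j` occurs for at most
two centers. The geometric series `2 ∑_j e^{-βj}` then gives the bound.
-/

open scoped BigOperators

noncomputable section

/-- The ℓ¹-norm of a lattice point `i ∈ ℤ^N`, as a natural number. -/
def l1Z {N : ℕ} (i : Fin N → ℤ) : ℕ := ∑ s, (i s).natAbs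

/-- The decay function `Γ_β(i) = a |i|^{-α} e^{-β|i|}` for `i ≠ 0`, `Γ_β(0) = a`. -/
noncomputable def GammaBeta (N : ℕ) (a α β : ℝ) (i : Fin N → ℤ) : ℝ :=
  if i = 0 then a else a * ((l1Z i : ℝ)) ^ (-α) * Real.exp (-β * (l1Z i : ℝ))

open Finset

theorem sum_pow_lt_inv_one_sub (s : Finset ℕ) {x : ℝ} (hx0 : 0 < x) (hx1 : x < 1) :
    ∑ j ∈ s, x ^ j < (1 - x)⁻¹ := by
  obtain ⟨T, hT⟩ := s.exists_nat_subset_range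
  calc ∑ j ∈ s, x ^ j ≤ ∑ j ∈ range T, x ^ j :=
        sum_le_sum_of_subset_of_nonneg hT fun _ _ _ => by positivity
    _ = (1 - x ^ T) / (1 - x) := by rw [geom_sum_eq hx1.ne, ← neg_div_neg_eq, neg_sub, neg_sub]
    _ < 1 / (1 - x) := by
        gcongr
        exact sub_lt_self 1 (pow_pos hx0 T)
    _ = (1 - x)⁻¹ := one_div _

section Fibers

variable {ι : Type*} [Fintype ι]

theorem card_fiber_le_two (d : ι → ℕ)
    (h : ∀ p q s, p ≠ q → q ≠ s → p ≠ s → ¬ (d p = d q ∧ d q = d s)) (n : ℕ) :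
    #{k | d k = n} ≤ 2 := by
  by_contra! hcard
  obtain ⟨p, hp, q, hq, s, hs, hpq, hps, hqs⟩ := two_lt_card.mp hcard
  simp only [mem_filter, mem_univ, true_and] at hp hq hs
  exact h p q s hpq hqs hps ⟨hp.trans hq.symm, hq.trans hs.symm⟩

theorem sum_pow_comp_lt_of_card_fiber_le [Nonempty ι] {x : ℝ} (hx0 : 0 < x) (hx1 : x < 1)
    (d : ι → ℕ) {K : ℕ} (hfib : ∀ n, #{k | d k = n} ≤ K) :
    ∑ k, x ^ d k < K * (1 - x)⁻¹ := by
  obtain ⟨k₀⟩ := ‹Nonempty ι›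
  have hK : (0 : ℝ) < K := by
    exact_mod_cast (card_pos.mpr ⟨k₀, by simp⟩).trans_le (hfib (d k₀))
  calc ∑ k, x ^ d k = ∑ n ∈ univ.image d, #{k | d k = n} • x ^ n := sum_comp (x ^ ·) d
    _ ≤ ∑ n ∈ univ.image d, K * x ^ n := by
        gcongr with n
        rw [nsmul_eq_mul]
        gcongr
        exact_mod_cast hfib n
    _ = K * ∑ n ∈ univ.image d, x ^ n := (mul_sum _ _ _).symm
    _ < K * (1 - x)⁻¹ := mul_lt_mul_of_pos_left (sum_pow_lt_inv_one_sub _ hx0 hx1) hK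

theorem sum_lt_of_geometric_decay (hne : (univ : Finset ι).Nonempty) {f : ι → ℝ} (d : ι → ℕ)
    {x : ℝ} (hx0 : 0 < x) (hx1 : x < 1) {K : ℕ} (hfib : ∀ n, #{k | d k = n} ≤ K)
    (hf : ∀ k, 0 < f k) (hdecay : ∀ k l, d k ≤ d l → f l ≤ f k * x ^ (d l - d k)) :
    ∑ k, f k < K / (1 - x) * univ.sup' hne f := by
  have : Nonempty ι := univ_nonempty_iff.mp hne
  obtain ⟨k₀, -, hk₀⟩ := exists_min_image univ d hne
  set M := univ.sup' hne f
  have hM : f k₀ ≤ M := le_sup' f (mem_univ k₀)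
  have hfib' : ∀ n, #{k | d k - d k₀ = n} ≤ K := fun n => by
    rw [filter_congr fun k _ => show d k - d k₀ = n ↔ d k = n + d k₀ by
      have := hk₀ k (mem_univ k); omega]
    exact hfib _
  calc ∑ k, f k ≤ ∑ k, M * x ^ (d k - d k₀) :=
        sum_le_sum fun k _ => (hdecay k₀ k (hk₀ k (mem_univ k))).trans (by gcongr)
    _ = M * ∑ k, x ^ (d k - d k₀) := (mul_sum _ _ _).symm
    _ < M * (K * (1 - x)⁻¹) := mul_lt_mul_of_pos_left
        (sum_pow_comp_lt_of_card_fiber_le hx0 hx1 _ hfib') ((hf k₀).trans_le hM)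
    _ = K / (1 - x) * M := by ring

end Fibers

section GammaBeta

variable {N : ℕ}

theorem l1Z_eq_zero_iff {i : Fin N → ℤ} : l1Z i = 0 ↔ i = 0 := by
  simp [l1Z, sum_eq_zero_iff, funext_iff]

theorem l1Z_sub_comm (i j : Fin N → ℤ) : l1Z (i - j) = l1Z (j - i) := by
  simp only [l1Z, Pi.sub_apply, ← Int.natAbs_neg (i _ - j _), neg_sub]

theorem GammaBeta_eq (a α β : ℝ) (i : Fin N → ℤ) :
    GammaBeta N a α β i = a * max (l1Z i : ℝ) 1 ^ (-α) * Real.exp (-β) ^ l1Z i := by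
  unfold GammaBeta
  split_ifs with h
  · simp [l1Z_eq_zero_iff.mpr h]
  · have h1 : (1 : ℝ) ≤ l1Z i := by
      exact_mod_cast Nat.one_le_iff_ne_zero.mpr (mt l1Z_eq_zero_iff.mp h)
    rw [max_eq_left h1, ← Real.exp_nat_mul, mul_comm (l1Z i : ℝ)]

theorem GammaBeta_pos {a : ℝ} (ha : 0 < a) (α β : ℝ) (i : Fin N → ℤ) :
    0 < GammaBeta N a α β i := by
  rw [GammaBeta_eq]
  positivity

theorem GammaBeta_le_mul_exp_pow {a α : ℝ} (ha : 0 ≤ a) (hα : 0 ≤ α) (β : ℝ)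
    {i j : Fin N → ℤ} (h : l1Z i ≤ l1Z j) :
    GammaBeta N a α β j ≤ GammaBeta N a α β i * Real.exp (-β) ^ (l1Z j - l1Z i) := by
  rw [GammaBeta_eq, GammaBeta_eq, mul_assoc (a * _), ← pow_add, Nat.add_sub_cancel' h]
  have hmax : max (l1Z j : ℝ) 1 ^ (-α) ≤ max (l1Z i : ℝ) 1 ^ (-α) :=
    Real.rpow_le_rpow_of_nonpos (by positivity) (by gcongr) (neg_nonpos.mpr hα)
  gcongr

end GammaBeta

/-- Summation over spatially non-resonant centers: if no three of the pairwise
distinct sites `c_1, …, c_r` are equidistant from any `i`, then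
`∑_k Γ_β(i−c_k) < (2/(1−e^{−β})) max_k Γ_β(i−c_k)`. -/
theorem statement14 {N : ℕ} (a α β : ℝ)
    (hα : (N : ℝ) < α) (ha : 0 < a) (hβ : 0 < β)
    (r : ℕ) (hr : 2 ≤ r) (c : Fin r → (Fin N → ℤ))
    (hnr : ∀ i : Fin N → ℤ, ∀ p q s : Fin r, p ≠ q → q ≠ s → p ≠ s →
      ¬ (l1Z (c p - i) = l1Z (c q - i) ∧ l1Z (c q - i) = l1Z (c s - i))) :
    ∀ i : Fin N → ℤ,
      (∑ k : Fin r, GammaBeta N a α β (i - c k)) <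
        (2 / (1 - Real.exp (-β))) *
          Finset.univ.sup' (Finset.univ_nonempty_iff.mpr ⟨⟨0, by omega⟩⟩)
            (fun k : Fin r => GammaBeta N a α β (i - c k)) := by
  intro i
  have hα0 : 0 ≤ α := (Nat.cast_nonneg N).trans hα.le
  have hfib := card_fiber_le_two (fun k => l1Z (i - c k))
    (by simpa only [l1Z_sub_comm (c _) i] using hnr i)
  exact_mod_cast sum_lt_of_geometric_decay _ (fun k => l1Z (i - c k)) (Real.exp_pos (-β))
    (Real.exp_lt_one_iff.mpr (neg_neg_of_pos hβ)) hfib (fun k => GammaBeta_pos ha α β _)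
    (fun k l h => GammaBeta_le_mul_exp_pow ha.le hα0 β h)
end
end

section
/- (Solvability of the cohomological equation along a uniformly contracted cocycle) Let X be a Banach space, l ≥ 1, ω ∈ ℝ^l, and let M : ℝ^l → L(X) and E : ℝ^l → X be continuous, bounded and ℤ^l-periodic. Assume there are C_h ≥ 1 and 0 < μ < 1 such that ‖M(θ+(n−1)ω) ∘ ⋯ ∘ M(θ+ω) ∘ M(θ)‖ ≤ C_h·μ^n for all n ≥ 1 and all θ ∈ ℝ^l. Then there exists a unique bounded continuous ℤ^l-periodic map Δ : ℝ^l → X satisfying M(θ)Δ(θ) − Δ(θ+ω) = −E(θ) for all θ, and it satisfies sup_θ ‖Δ(θ)‖ ≤ C_h(1−μ)^{−1} sup_θ ‖E(θ)‖. -/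
open scoped BigOperators

noncomputable section

/-- The cocycle `M(θ+(n−1)ω) ∘ ⋯ ∘ M(θ+ω) ∘ M(θ)` over the rotation by `ω`. -/
noncomputable def cocycle {l : ℕ} {X : Type*} [NormedAddCommGroup X]
    [NormedSpace ℝ X] (M : (Fin l → ℝ) → X →L[ℝ] X) (ω : Fin l → ℝ) :
    ℕ → (Fin l → ℝ) → X →L[ℝ] X
  | 0, _ => 1
  | n + 1, θ => (M (θ + n • ω)).comp (cocycle M ω n θ)

/-!
The solution is the Neumann series `Δ(θ) = ∑ₙ M(θ-ω)⋯M(θ-nω) E(θ-(n+1)ω)`, obtained by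
iterating `Δ(θ+ω) = E(θ) + M(θ)Δ(θ)` backwards; the uniform contraction of the cocycle makes it
converge uniformly, with the geometric bound `C_h ∑ μⁿ sup‖E‖`. Uniqueness: the difference `D`
of two bounded solutions satisfies `D(θ+nω) = M(θ+(n-1)ω)⋯M(θ) D(θ)`, hence
`‖D(θ)‖ ≤ C_h μⁿ sup‖D‖ → 0`.
-/

section Cocycle

variable {l : ℕ} {X : Type*} [NormedAddCommGroup X] [NormedSpace ℝ X]
  (M : (Fin l → ℝ) → X →L[ℝ] X) (ω : Fin l → ℝ)

theorem cocycle_zero (θ : Fin l → ℝ) : cocycle M ω 0 θ = 1 := rfl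

theorem cocycle_succ_apply (n : ℕ) (θ : Fin l → ℝ) (x : X) :
    cocycle M ω (n + 1) θ x = M (θ + n • ω) (cocycle M ω n θ x) := rfl

theorem continuous_cocycle (hM : Continuous M) (n : ℕ) : Continuous (cocycle M ω n) := by
  induction n with
  | zero => exact continuous_const
  | succ n ih => exact (hM.comp (continuous_add_const _)).clm_comp ih

theorem cocycle_add_of_forall {v : Fin l → ℝ} (hM : ∀ θ, M (θ + v) = M θ) (n : ℕ)
    (θ : Fin l → ℝ) : cocycle M ω n (θ + v) = cocycle M ω n θ := by
  induction n with
  | zero => rfl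
  | succ n ih =>
    change (M (θ + v + n • ω)).comp _ = (M (θ + n • ω)).comp _
    rw [add_right_comm, hM, ih]

theorem norm_cocycle_le {C μ : ℝ} (hC : 1 ≤ C)
    (hco : ∀ n : ℕ, 1 ≤ n → ∀ θ, ‖cocycle M ω n θ‖ ≤ C * μ ^ n) (n : ℕ) (θ : Fin l → ℝ) :
    ‖cocycle M ω n θ‖ ≤ C * μ ^ n := by
  rcases n with _ | n
  · rw [cocycle_zero, pow_zero, mul_one]
    exact (ContinuousLinearMap.norm_id_le : ‖(1 : X →L[ℝ] X)‖ ≤ 1).trans hC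
  · exact hco _ n.succ_pos θ

theorem apply_add_nsmul_eq_cocycle {D : (Fin l → ℝ) → X} (hD : ∀ θ, D (θ + ω) = M θ (D θ))
    (n : ℕ) (θ : Fin l → ℝ) : D (θ + n • ω) = cocycle M ω n θ (D θ) := by
  induction n with
  | zero => simp [cocycle_zero]
  | succ n ih => rw [succ_nsmul, ← add_assoc, hD, ih, cocycle_succ_apply]

theorem eq_zero_of_apply_add_eq_of_bounded {C μ B : ℝ} (hμ0 : 0 ≤ μ) (hμ1 : μ < 1)
    (hco : ∀ n θ, ‖cocycle M ω n θ‖ ≤ C * μ ^ n) {D : (Fin l → ℝ) → X}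
    (hD : ∀ θ, D (θ + ω) = M θ (D θ)) (hB : ∀ θ, ‖D θ‖ ≤ B) : D = 0 := by
  funext θ
  have hle : ∀ n : ℕ, ‖D θ‖ ≤ C * μ ^ n * B := fun n => by
    have h := apply_add_nsmul_eq_cocycle M ω hD n (θ - n • ω)
    rw [sub_add_cancel] at h
    rw [h]
    exact (cocycle M ω n _).le_of_opNorm_le_of_le (hco n _) (hB _)
  have htend : Filter.Tendsto (fun n : ℕ => C * μ ^ n * B) Filter.atTop (nhds 0) := by
    simpa using ((tendsto_pow_atTop_nhds_zero_of_lt_one hμ0 hμ1).const_mul C).mul_const B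
  exact norm_le_zero_iff.mp (ge_of_tendsto' htend hle)

end Cocycle

section Solution

variable {l : ℕ} {X : Type*} [NormedAddCommGroup X] [NormedSpace ℝ X]
  (M : (Fin l → ℝ) → X →L[ℝ] X) (ω : Fin l → ℝ) (E : (Fin l → ℝ) → X)

def cohomSeriesTerm (θ : Fin l → ℝ) (n : ℕ) : X :=
  cocycle M ω n (θ - n • ω) (E (θ - (n + 1) • ω))

def cohomSolution (θ : Fin l → ℝ) : X :=
  ∑' n, cohomSeriesTerm M ω E θ n

theorem cohomSeriesTerm_zero_add (θ : Fin l → ℝ) :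
    cohomSeriesTerm M ω E (θ + ω) 0 = E θ := by
  simp [cohomSeriesTerm, cocycle_zero]

theorem cohomSeriesTerm_add_succ (θ : Fin l → ℝ) (n : ℕ) :
    cohomSeriesTerm M ω E (θ + ω) (n + 1) = M θ (cohomSeriesTerm M ω E θ n) := by
  have h₁ : θ + ω - (n + 1 : ℕ) • ω = θ - n • ω := by rw [succ_nsmul]; abel
  have h₂ : θ + ω - (n + 1 + 1) • ω = θ - (n + 1) • ω := by rw [succ_nsmul _ (n + 1)]; abel
  rw [cohomSeriesTerm, h₁, h₂, cocycle_succ_apply, sub_add_cancel, cohomSeriesTerm]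

theorem cohomSolution_add_of_forall {v : Fin l → ℝ} (hM : ∀ θ, M (θ + v) = M θ)
    (hE : ∀ θ, E (θ + v) = E θ) (θ : Fin l → ℝ) :
    cohomSolution M ω E (θ + v) = cohomSolution M ω E θ := by
  simp only [cohomSolution, cohomSeriesTerm, add_sub_right_comm θ v,
    cocycle_add_of_forall M ω hM, hE]

variable {M ω E} {C μ CE : ℝ}

theorem norm_cohomSeriesTerm_le (hco : ∀ n θ, ‖cocycle M ω n θ‖ ≤ C * μ ^ n)
    (hE : ∀ θ, ‖E θ‖ ≤ CE) (θ : Fin l → ℝ) (n : ℕ) :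
    ‖cohomSeriesTerm M ω E θ n‖ ≤ C * μ ^ n * CE :=
  (cocycle M ω n _).le_of_opNorm_le_of_le (hco n _) (hE _)

theorem hasSum_mul_geometric_mul (hμ0 : 0 ≤ μ) (hμ1 : μ < 1) :
    HasSum (fun n : ℕ => C * μ ^ n * CE) (C * (1 - μ)⁻¹ * CE) :=
  ((hasSum_geometric_of_lt_one hμ0 hμ1).mul_left C).mul_right CE

theorem norm_cohomSolution_le (hco : ∀ n θ, ‖cocycle M ω n θ‖ ≤ C * μ ^ n)
    (hE : ∀ θ, ‖E θ‖ ≤ CE) (hμ0 : 0 ≤ μ) (hμ1 : μ < 1) (θ : Fin l → ℝ) :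
    ‖cohomSolution M ω E θ‖ ≤ C * (1 - μ)⁻¹ * CE :=
  tsum_of_norm_bounded (hasSum_mul_geometric_mul hμ0 hμ1) (norm_cohomSeriesTerm_le hco hE θ)

variable [CompleteSpace X]

theorem summable_cohomSeriesTerm (hco : ∀ n θ, ‖cocycle M ω n θ‖ ≤ C * μ ^ n)
    (hE : ∀ θ, ‖E θ‖ ≤ CE) (hμ0 : 0 ≤ μ) (hμ1 : μ < 1) (θ : Fin l → ℝ) :
    Summable (cohomSeriesTerm M ω E θ) :=
  (hasSum_mul_geometric_mul hμ0 hμ1).summable.of_norm_bounded (norm_cohomSeriesTerm_le hco hE θ)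

theorem continuous_cohomSolution (hco : ∀ n θ, ‖cocycle M ω n θ‖ ≤ C * μ ^ n)
    (hE : ∀ θ, ‖E θ‖ ≤ CE) (hμ0 : 0 ≤ μ) (hμ1 : μ < 1)
    (hMc : Continuous M) (hEc : Continuous E) :
    Continuous (cohomSolution M ω E) :=
  continuous_tsum
    (fun n => ((continuous_cocycle M ω hMc n).comp (continuous_sub_right _)).clm_apply
      (hEc.comp (continuous_sub_right _)))
    (hasSum_mul_geometric_mul hμ0 hμ1).summable
    (fun n θ => norm_cohomSeriesTerm_le hco hE θ n)

theorem cohomSolution_equation (hco : ∀ n θ, ‖cocycle M ω n θ‖ ≤ C * μ ^ n)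
    (hE : ∀ θ, ‖E θ‖ ≤ CE) (hμ0 : 0 ≤ μ) (hμ1 : μ < 1) (θ : Fin l → ℝ) :
    M θ (cohomSolution M ω E θ) - cohomSolution M ω E (θ + ω) = -E θ := by
  have hsum := summable_cohomSeriesTerm hco hE hμ0 hμ1
  have hsplit : cohomSolution M ω E (θ + ω) = E θ + M θ (cohomSolution M ω E θ) := by
    rw [cohomSolution, (hsum _).tsum_eq_zero_add, cohomSeriesTerm_zero_add]
    simp only [cohomSeriesTerm_add_succ]
    rw [← (M θ).map_tsum (hsum θ), cohomSolution]
  rw [hsplit]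
  abel

end Solution

theorem eq_of_cohomological_equation {l : ℕ} {X : Type*} [NormedAddCommGroup X]
    [NormedSpace ℝ X] {M : (Fin l → ℝ) → X →L[ℝ] X} {ω : Fin l → ℝ} {E Δ₁ Δ₂ : (Fin l → ℝ) → X}
    {C μ B₁ B₂ : ℝ} (hμ0 : 0 ≤ μ) (hμ1 : μ < 1) (hco : ∀ n θ, ‖cocycle M ω n θ‖ ≤ C * μ ^ n)
    (h₁ : ∀ θ, M θ (Δ₁ θ) - Δ₁ (θ + ω) = -E θ) (h₂ : ∀ θ, M θ (Δ₂ θ) - Δ₂ (θ + ω) = -E θ)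
    (hB₁ : ∀ θ, ‖Δ₁ θ‖ ≤ B₁) (hB₂ : ∀ θ, ‖Δ₂ θ‖ ≤ B₂) : Δ₁ = Δ₂ := by
  have hD : ∀ θ, (Δ₁ - Δ₂) (θ + ω) = M θ ((Δ₁ - Δ₂) θ) := fun θ => by
    have := (h₁ θ).trans (h₂ θ).symm
    rw [Pi.sub_apply, Pi.sub_apply, map_sub]
    linear_combination (norm := abel) -this
  have hB : ∀ θ, ‖(Δ₁ - Δ₂) θ‖ ≤ B₁ + B₂ := fun θ =>
    (norm_sub_le _ _).trans (add_le_add (hB₁ θ) (hB₂ θ))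
  exact sub_eq_zero.mp (eq_zero_of_apply_add_eq_of_bounded M ω hμ0 hμ1 hco hD hB)

theorem statement16_general {l : ℕ} {X : Type*} [NormedAddCommGroup X]
    [NormedSpace ℝ X] [CompleteSpace X]
    (ω : Fin l → ℝ) (M : (Fin l → ℝ) → X →L[ℝ] X) (E : (Fin l → ℝ) → X)
    (hMcont : Continuous M) (hEcont : Continuous E)
    (hMper : ∀ (θ : Fin l → ℝ) (k : Fin l → ℤ), M (θ + fun s => (k s : ℝ)) = M θ)
    (hEper : ∀ (θ : Fin l → ℝ) (k : Fin l → ℤ), E (θ + fun s => (k s : ℝ)) = E θ)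
    (Ch μ CE : ℝ) (hCh : 1 ≤ Ch) (hμ0 : 0 < μ) (hμ1 : μ < 1)
    (hco : ∀ n : ℕ, 1 ≤ n → ∀ θ, ‖cocycle M ω n θ‖ ≤ Ch * μ ^ n)
    (hCE : ∀ θ, ‖E θ‖ ≤ CE) :
    ∃ Δ : (Fin l → ℝ) → X,
      (Continuous Δ ∧
        (∀ (θ : Fin l → ℝ) (k : Fin l → ℤ), Δ (θ + fun s => (k s : ℝ)) = Δ θ) ∧
        (∃ b : ℝ, ∀ θ, ‖Δ θ‖ ≤ b) ∧
        (∀ θ, M θ (Δ θ) - Δ (θ + ω) = - E θ)) ∧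
      (∀ θ, ‖Δ θ‖ ≤ Ch * (1 - μ)⁻¹ * CE) ∧
      (∀ Δ' : (Fin l → ℝ) → X,
        Continuous Δ' →
        (∀ (θ : Fin l → ℝ) (k : Fin l → ℤ), Δ' (θ + fun s => (k s : ℝ)) = Δ' θ) →
        (∃ b : ℝ, ∀ θ, ‖Δ' θ‖ ≤ b) →
        (∀ θ, M θ (Δ' θ) - Δ' (θ + ω) = - E θ) →
        Δ' = Δ) := by
  have hco' := norm_cocycle_le M ω hCh hco
  have hbound := norm_cohomSolution_le hco' hCE hμ0.le hμ1
  have hequation := cohomSolution_equation hco' hCE hμ0.le hμ1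
  refine ⟨cohomSolution M ω E,
    ⟨continuous_cohomSolution hco' hCE hμ0.le hμ1 hMcont hEcont,
      fun θ k => cohomSolution_add_of_forall M ω E (hMper · k) (hEper · k) θ,
      ⟨_, hbound⟩, hequation⟩, hbound, ?_⟩
  rintro Δ' - - ⟨b, hb⟩ hequation'
  exact eq_of_cohomological_equation hμ0.le hμ1 hco' hequation' hequation hb hbound

/-- Solvability of the cohomological equation along a uniformly contracted cocycle:
if `‖M(θ+(n−1)ω)⋯M(θ)‖ ≤ C_h μⁿ` with `0 < μ < 1`, then
`M(θ)Δ(θ) − Δ(θ+ω) = −E(θ)` has a unique bounded continuous periodic solution `Δ`,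
with `sup‖Δ‖ ≤ C_h (1−μ)⁻¹ sup‖E‖`. -/
theorem statement16 {l : ℕ} (hl : 1 ≤ l) {X : Type*} [NormedAddCommGroup X]
    [NormedSpace ℝ X] [CompleteSpace X]
    (ω : Fin l → ℝ) (M : (Fin l → ℝ) → X →L[ℝ] X) (E : (Fin l → ℝ) → X)
    (hMcont : Continuous M) (hEcont : Continuous E)
    (hMbd : ∃ b : ℝ, ∀ θ, ‖M θ‖ ≤ b)
    (hMper : ∀ (θ : Fin l → ℝ) (k : Fin l → ℤ), M (θ + fun s => (k s : ℝ)) = M θ)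
    (hEper : ∀ (θ : Fin l → ℝ) (k : Fin l → ℤ), E (θ + fun s => (k s : ℝ)) = E θ)
    (Ch μ CE : ℝ) (hCh : 1 ≤ Ch) (hμ0 : 0 < μ) (hμ1 : μ < 1)
    (hco : ∀ n : ℕ, 1 ≤ n → ∀ θ, ‖cocycle M ω n θ‖ ≤ Ch * μ ^ n)
    (hCE : ∀ θ, ‖E θ‖ ≤ CE) :
    ∃ Δ : (Fin l → ℝ) → X,
      (Continuous Δ ∧
        (∀ (θ : Fin l → ℝ) (k : Fin l → ℤ), Δ (θ + fun s => (k s : ℝ)) = Δ θ) ∧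
        (∃ b : ℝ, ∀ θ, ‖Δ θ‖ ≤ b) ∧
        (∀ θ, M θ (Δ θ) - Δ (θ + ω) = - E θ)) ∧
      (∀ θ, ‖Δ θ‖ ≤ Ch * (1 - μ)⁻¹ * CE) ∧
      (∀ Δ' : (Fin l → ℝ) → X,
        Continuous Δ' →
        (∀ (θ : Fin l → ℝ) (k : Fin l → ℤ), Δ' (θ + fun s => (k s : ℝ)) = Δ' θ) →
        (∃ b : ℝ, ∀ θ, ‖Δ' θ‖ ≤ b) →
        (∀ θ, M θ (Δ' θ) - Δ' (θ + ω) = - E θ) →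
        Δ' = Δ) :=
  statement16_general ω M E hMcont hEcont hMper hEper Ch μ CE hCh hμ0 hμ1 hco hCE
end
end

section
/- (Chain rule preserves decay) Let Γ be a decay function on ℤ^N, and let g, η ≥ 0. Suppose G = (G_i)_{i∈ℤ^N} and h = (h_k)_{k∈ℤ^N} are families of real-valued Fréchet-differentiable functions on ℓ∞(ℤ^N;ℝ) whose derivatives are represented by matrices: DG_i(y)u = ∑_k b_{ik}(y)u_k with |b_{ik}(y)| ≤ g·Γ(i−k), and Dh_k(x)u = ∑_j c_{kj}(x)u_j with |c_{kj}(x)| ≤ η·Γ(k−j), for all points and indices, and that h maps ℓ∞(ℤ^N;ℝ) into itself. Then each composite function (G∘h)_i = G_i ∘ h is differentiable with derivative represented by the matrix d_{ij}(x) = ∑_{k∈ℤ^N} b_{ik}(h(x))c_{kj}(x) (an absolutely convergent series), and |d_{ij}(x)| ≤ g·η·Γ(i−j) for all i, j and all x. -/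
open scoped BigOperators

noncomputable section

set_option maxHeartbeats 1000000
set_option synthInstance.maxHeartbeats 1000000

/-- Coordinate evaluation as a continuous linear map on `ℓ∞`. -/
def evalCLM' {N : ℕ} (k : Idx N) : LinfR N →L[ℝ] ℝ :=
  LinearMap.mkContinuous
    { toFun := fun f => f k, map_add' := fun f g => rfl, map_smul' := fun r f => rfl } 1
    (fun f => by rw [one_mul]; exact lp.norm_apply_le_norm ENNReal.top_ne_zero f k)

/-- Chain rule preserves decay: if `DG_i` has matrix `b` with `|b_{ik}| ≤ g Γ(i−k)`
and `Dh_k` has matrix `c` with `|c_{kj}| ≤ η Γ(k−j)`, then each composite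
`(G∘h)_i` is differentiable with derivative given by the matrix
`d_{ij}(x) = ∑_k b_{ik}(h(x)) c_{kj}(x)` (absolutely convergent) and
`|d_{ij}(x)| ≤ g η Γ(i−j)`. -/
theorem statement19 {N : ℕ} (Γ : Idx N → ℝ) (hΓ : IsDecayFunction Γ)
    (g η : ℝ) (hg : 0 ≤ g) (hη : 0 ≤ η)
    (G : Idx N → LinfR N → ℝ) (h : LinfR N → LinfR N)
    (b : Idx N → Idx N → LinfR N → ℝ) (c : Idx N → Idx N → LinfR N → ℝ)
    (hGdiff : ∀ i, Differentiable ℝ (G i))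
    (hGrep : ∀ (i : Idx N) (y : LinfR N) (u : LinfR N),
      fderiv ℝ (G i) y u = ∑' k, b i k y * u k)
    (hGbd : ∀ (i k : Idx N) (y : LinfR N), |b i k y| ≤ g * Γ (i - k))
    (hhdiff : Differentiable ℝ h)
    (hhrep : ∀ (k : Idx N) (x : LinfR N) (u : LinfR N),
      fderiv ℝ (fun y => h y k) x u = ∑' j, c k j x * u j)
    (hhbd : ∀ (k j : Idx N) (x : LinfR N), |c k j x| ≤ η * Γ (k - j)) :
    ∀ i : Idx N,
      Differentiable ℝ (fun x => G i (h x)) ∧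
      (∀ (j : Idx N) (x : LinfR N),
        Summable (fun k => |b i k (h x) * c k j x|) ∧
        |∑' k, b i k (h x) * c k j x| ≤ g * η * Γ (i - j)) ∧
      (∀ (x : LinfR N) (u : LinfR N),
        fderiv ℝ (fun y => G i (h y)) x u =
          ∑' j, (∑' k, b i k (h x) * c k j x) * u j) := by
  obtain ⟨hpos, hsum, htsum, hconv⟩ := hΓ
  have hΓnn : ∀ m, 0 ≤ Γ m := fun m => (hpos m).le
  have hΓ1 : ∀ m, Γ m ≤ 1 := fun m =>
    le_trans (Summable.le_tsum hsum m (fun _ _ => hΓnn _)) htsum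
  have hsumL : ∀ a : Idx N, Summable (fun k => Γ (a - k)) := fun a =>
    (Equiv.subLeft a).summable_iff.2 hsum
  have htsumL : ∀ a : Idx N, (∑' k, Γ (a - k)) ≤ 1 := fun a =>
    le_trans (le_of_eq ((Equiv.subLeft a).tsum_eq Γ)) htsum
  -- summability of Γ(i-k)Γ(k-j) in k
  have hsum2 : ∀ a j : Idx N, Summable (fun k => Γ (a - k) * Γ (k - j)) := by
    intro a j
    refine Summable.of_nonneg_of_le (fun k => mul_nonneg (hΓnn _) (hΓnn _)) ?_ (hsumL a)
    intro k
    calc Γ (a - k) * Γ (k - j) ≤ Γ (a - k) * 1 :=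
          mul_le_mul_of_nonneg_left (hΓ1 _) (hΓnn _)
      _ = Γ (a - k) := mul_one _
  intro i
  have key : ∀ (j : Idx N) (x : LinfR N), Summable (fun k => |b i k (h x) * c k j x|) := by
    intro j x
    refine Summable.of_nonneg_of_le (fun k => abs_nonneg _) ?_ (((hsum2 i j).mul_left (g * η)))
    intro k
    rw [abs_mul]
    calc |b i k (h x)| * |c k j x| ≤ (g * Γ (i - k)) * (η * Γ (k - j)) :=
          mul_le_mul (hGbd i k (h x)) (hhbd k j x) (abs_nonneg _)
            (mul_nonneg hg (hΓnn _))
      _ = g * η * (Γ (i - k) * Γ (k - j)) := by ring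
  refine ⟨(hGdiff i).comp hhdiff, fun j x => ⟨key j x, ?_⟩, ?_⟩
  · calc |∑' k, b i k (h x) * c k j x| ≤ ∑' k, |b i k (h x) * c k j x| := by
          simpa only [Real.norm_eq_abs] using norm_tsum_le_tsum_norm
            (f := fun k => b i k (h x) * c k j x) (by simpa only [Real.norm_eq_abs] using key j x)
      _ ≤ ∑' k, g * η * (Γ (i - k) * Γ (k - j)) := by
          refine Summable.tsum_le_tsum ?_ (key j x) ((hsum2 i j).mul_left (g * η))
          intro k
          rw [abs_mul]
          calc |b i k (h x)| * |c k j x| ≤ (g * Γ (i - k)) * (η * Γ (k - j)) :=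
                mul_le_mul (hGbd i k (h x)) (hhbd k j x) (abs_nonneg _)
                  (mul_nonneg hg (hΓnn _))
            _ = g * η * (Γ (i - k) * Γ (k - j)) := by ring
      _ = g * η * ∑' k, Γ (i - k) * Γ (k - j) := tsum_mul_left
      _ ≤ g * η * Γ (i - j) :=
          mul_le_mul_of_nonneg_left (hconv i j) (mul_nonneg hg hη)
  · intro x u
    have hu : ∀ j, |u j| ≤ ‖u‖ := fun j => by
      simpa only [Real.norm_eq_abs] using lp.norm_apply_le_norm ENNReal.top_ne_zero u j
    -- the uncurried family
    set F : Idx N → Idx N → ℝ := fun k j => b i k (h x) * (c k j x * u j) with hF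
    have hFbd : ∀ k j, |F k j| ≤ g * η * ‖u‖ * (Γ (i - k) * Γ (k - j)) := by
      intro k j
      rw [hF]
      simp only []
      rw [abs_mul, abs_mul]
      calc |b i k (h x)| * (|c k j x| * |u j|)
          ≤ (g * Γ (i - k)) * ((η * Γ (k - j)) * ‖u‖) :=
            mul_le_mul (hGbd i k (h x))
              (mul_le_mul (hhbd k j x) (hu j) (abs_nonneg _) (mul_nonneg hη (hΓnn _)))
              (mul_nonneg (abs_nonneg _) (abs_nonneg _))
              (mul_nonneg hg (hΓnn _))
        _ = g * η * ‖u‖ * (Γ (i - k) * Γ (k - j)) := by ring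
    -- summability of the majorant on the product
    have hmaj0 : Summable (fun p : Idx N × Idx N => Γ (i - p.1) * Γ (p.1 - p.2)) := by
      rw [summable_prod_of_nonneg (fun p => mul_nonneg (hΓnn _) (hΓnn _))]
      constructor
      · intro k
        simpa using (hsumL k).mul_left (Γ (i - k))
      · refine Summable.of_nonneg_of_le
          (fun k => tsum_nonneg fun j => mul_nonneg (hΓnn _) (hΓnn _)) ?_ (hsumL i)
        intro k
        calc (∑' j, Γ (i - k) * Γ (k - j)) = Γ (i - k) * ∑' j, Γ (k - j) := tsum_mul_left
          _ ≤ Γ (i - k) * 1 := mul_le_mul_of_nonneg_left (htsumL k) (hΓnn _)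
          _ = Γ (i - k) := mul_one _
    have hmaj : Summable (fun p : Idx N × Idx N =>
        g * η * ‖u‖ * (Γ (i - p.1) * Γ (p.1 - p.2))) := hmaj0.mul_left _
    have hFsum : Summable (Function.uncurry F) := by
      rw [← summable_abs_iff]
      exact Summable.of_nonneg_of_le (fun p => abs_nonneg _) (fun p => hFbd p.1 p.2) hmaj
    -- evaluate the derivative of h coordinatewise
    have hev : ∀ k, (fderiv ℝ h x u) k = ∑' j, c k j x * u j := by
      intro k
      have h2 : fderiv ℝ (fun y => evalCLM' k (h y)) x = (evalCLM' k).comp (fderiv ℝ h x) := by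
        rw [show (fun y => evalCLM' k (h y)) = (evalCLM' k) ∘ h from rfl,
          fderiv_comp x ((evalCLM' k).differentiableAt) (hhdiff x),
          ContinuousLinearMap.fderiv]
      calc (fderiv ℝ h x u) k = ((evalCLM' k).comp (fderiv ℝ h x)) u := rfl
        _ = fderiv ℝ (fun y => h y k) x u := by rw [← h2]; rfl
        _ = ∑' j, c k j x * u j := hhrep k x u
    have hd1 : fderiv ℝ (fun y => G i (h y)) x =
        (fderiv ℝ (G i) (h x)).comp (fderiv ℝ h x) := by
      rw [show (fun y => G i (h y)) = (G i) ∘ h from rfl]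
      exact fderiv_comp x ((hGdiff i).differentiableAt) (hhdiff.differentiableAt)
    calc fderiv ℝ (fun y => G i (h y)) x u
        = fderiv ℝ (G i) (h x) (fderiv ℝ h x u) := by rw [hd1]; rfl
      _ = ∑' k, b i k (h x) * (fderiv ℝ h x u) k := hGrep i (h x) _
      _ = ∑' k, ∑' j, F k j := by
          refine tsum_congr fun k => ?_
          rw [hev k, hF]
          exact tsum_mul_left.symm
      _ = ∑' j, ∑' k, F k j := (Summable.tsum_comm hFsum).symm
      _ = ∑' j, (∑' k, b i k (h x) * c k j x) * u j := by
          refine tsum_congr fun j => ?_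
          rw [← tsum_mul_right]
          exact tsum_congr fun k => by rw [hF]; ring
end
end
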